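/- arXiv:2304.00816 — 7 statements merged into one kernel-verified Lean document; each statement's English description precedes it below -/
import Mathlib

section
/- Let p be a prime and let f : ℤ_p → ℚ_p be strictly differentiable on ℤ_p, i.e. there is a continuous function g : ℤ_p × ℤ_p → ℚ_p with f(x) − f(y) = (x−y)·g(x,y) for all x, y ∈ ℤ_p; write f'(x) = g(x,x). Let k be a positive integer. Then the Volkenborn integrals of t ↦ f(t+k) and of f both exist, and ∫_{ℤ_p} f(t+k) dt = ∫_{ℤ_p} f(t) dt + ∑_{ℓ=0}^{k−1} f'(ℓ). -/
/-!
Write `u M = p⁻ᴹ ∑_{j < pᴹ} f j`. Cutting `[0, pᴹ⁺¹)` into `p` blocks of length `pᴹ` and using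
`f (q pᴹ + r) - f r = q pᴹ g (q pᴹ + r, r)` gives
`u (M + 1) - u M = p⁻¹ ∑_{q < p} q ∑_{r < pᴹ} g (q pᴹ + r, r)`.
By uniform continuity each inner sum is `∑_{r < pᴹ} f' r` up to an ultrametrically small error, and
for continuous `h` the sum `∑_{j < pᴹ} h j` tends to `0`: it is `pᴹ⁻ᴺ ∑_{r < pᴺ} h r` up to a small
error, since `j ≡ j % pᴺ [MOD pᴺ]`. So `u` is Cauchy in the complete ultrametric field `ℚ_p`.
For the translation, `∑_{i < pᴹ} (f (i + k) - f i) = ∑_{ℓ < k} (f (pᴹ + ℓ) - f ℓ)`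
`= pᴹ ∑_{ℓ < k} g (pᴹ + ℓ, ℓ)`, and `pᴹ → 0` in `ℤ_p`.
-/

open Filter Finset Topology

namespace Volkenborn

theorem sum_range_mul_eq_sum_sum {M : Type*} [AddCommMonoid M] (φ : ℕ → M) (a b : ℕ) :
    ∑ i ∈ range (a * b), φ i = ∑ q ∈ range a, ∑ r ∈ range b, φ (q * b + r) := by
  induction a with
  | zero => simp
  | succ a ih => rw [Nat.succ_mul, sum_range_add, ih, sum_range_succ]

theorem sum_range_mul_mod {M : Type*} [AddCommMonoid M] (φ : ℕ → M) (a b : ℕ) :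
    ∑ i ∈ range (a * b), φ (i % b) = a • ∑ r ∈ range b, φ r := by
  rw [sum_range_mul_eq_sum_sum]
  have hmod : ∀ q, ∀ r ∈ range b, φ ((q * b + r) % b) = φ r := fun q r hr => by
    rw [Nat.mul_add_mod_of_lt (mem_range.1 hr)]
  simp only [sum_congr rfl (hmod _), sum_const, card_range]

theorem sum_range_add_right_sub_sum_range {G : Type*} [AddCommGroup G] (φ : ℕ → G) (n k : ℕ) :
    ∑ i ∈ range n, φ (i + k) - ∑ i ∈ range n, φ i = ∑ ℓ ∈ range k, (φ (n + ℓ) - φ ℓ) := by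
  have h₁ := sum_range_add φ k n
  have h₂ := sum_range_add φ n k
  simp only [add_comm k n, add_comm k] at h₁
  rw [sum_sub_distrib]
  linear_combination (norm := abel) h₂ - h₁

theorem tendsto_sum_sub_of_tendstoUniformly {ι κ α E : Type*} [SeminormedAddCommGroup E]
    [IsUltrametricDist E] {l : Filter ι} {F : ι → α → E} {h : α → E}
    (hF : TendstoUniformly F h l) (s : ι → Finset κ) (x : κ → α) :
    Tendsto (fun n => ∑ j ∈ s n, (F n (x j) - h (x j))) l (𝓝 0) := by
  refine NormedAddGroup.tendsto_nhds_zero.2 fun ε hε => ?_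
  filter_upwards [Metric.tendstoUniformly_iff.1 hF (ε / 2) (half_pos hε)] with n hn
  refine lt_of_le_of_lt ?_ (half_lt_self hε)
  refine IsUltrametricDist.norm_sum_le_of_forall_le_of_nonneg (half_pos hε).le fun j _ => ?_
  rw [← dist_eq_norm, dist_comm]
  exact (hn (x j)).le

variable {p : ℕ} [hp : Fact p.Prime]

theorem norm_natCast_p_lt_one : ‖(p : ℤ_[p])‖ < 1 := by
  rw [PadicInt.norm_p]
  exact inv_lt_one_of_one_lt₀ (mod_cast hp.out.one_lt)

theorem tendsto_natCast_p_pow_nhds_zero : Tendsto (fun M : ℕ => (p : ℤ_[p]) ^ M) atTop (𝓝 0) :=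
  tendsto_pow_atTop_nhds_zero_of_norm_lt_one norm_natCast_p_lt_one

theorem exists_forall_dist_lt_of_pow_dvd_sub {X : Type*} [PseudoMetricSpace X]
    {h : ℤ_[p] → X} (hh : Continuous h) {ε : ℝ} (hε : 0 < ε) :
    ∃ N : ℕ, ∀ x y : ℤ_[p], (p : ℤ_[p]) ^ N ∣ x - y → dist (h x) (h y) < ε := by
  obtain ⟨δ, hδ, hδh⟩ := Metric.uniformContinuous_iff.1
    (CompactSpace.uniformContinuous_of_continuous hh) ε hε
  obtain ⟨N, hN⟩ := exists_pow_lt_of_lt_one hδ (norm_natCast_p_lt_one (p := p))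
  refine ⟨N, fun x y ⟨z, hz⟩ => hδh ?_⟩
  calc dist x y = ‖(p : ℤ_[p])‖ ^ N * ‖z‖ := by rw [dist_eq_norm, hz, norm_mul, norm_pow]
    _ ≤ ‖(p : ℤ_[p])‖ ^ N := mul_le_of_le_one_right (by positivity) (PadicInt.norm_le_one z)
    _ < δ := hN

theorem tendsto_sum_range_pow_nhds_zero {h : ℤ_[p] → ℚ_[p]} (hh : Continuous h) :
    Tendsto (fun M => ∑ j ∈ range (p ^ M), h j) atTop (𝓝 0) := by
  refine NormedAddGroup.tendsto_nhds_zero.2 fun ε hε => ?_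
  obtain ⟨N, hN⟩ := exists_forall_dist_lt_of_pow_dvd_sub hh (half_pos hε)
  set S := ∑ r ∈ range (p ^ N), h r
  have hS : Tendsto (fun M => (p : ℚ_[p]) ^ (M - N) * S) atTop (𝓝 0) := by
    simpa using ((tendsto_pow_atTop_nhds_zero_of_norm_lt_one Padic.norm_p_lt_one).comp
      (tendsto_sub_atTop_nat N)).mul_const S
  filter_upwards [eventually_ge_atTop N, NormedAddGroup.tendsto_nhds_zero.1 hS ε hε]
    with M hNM hSM
  have hsplit : ∑ j ∈ range (p ^ M), h j
      = (p : ℚ_[p]) ^ (M - N) * S + ∑ j ∈ range (p ^ M), (h j - h ((j % p ^ N : ℕ) : ℤ_[p])) := by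
    rw [sum_sub_distrib, ← Nat.pow_sub_mul_pow p hNM,
      sum_range_mul_mod (fun r => h (r : ℤ_[p])), nsmul_eq_mul]
    push_cast
    ring
  have herr : ‖∑ j ∈ range (p ^ M), (h j - h ((j % p ^ N : ℕ) : ℤ_[p]))‖ ≤ ε / 2 := by
    refine IsUltrametricDist.norm_sum_le_of_forall_le_of_nonneg (half_pos hε).le fun j _ => ?_
    rw [← dist_eq_norm]
    refine (hN _ _ ?_).le
    rw [← Nat.cast_sub (Nat.mod_le j _)]
    exact_mod_cast Nat.cast_dvd_cast (Nat.dvd_sub_mod j)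
  rw [hsplit]
  exact (IsUltrametricDist.norm_add_le_max _ _).trans_lt
    (max_lt hSM (herr.trans_lt (half_lt_self hε)))

theorem tendsto_sum_range_pow_of_tendstoUniformly {F : ℕ → ℤ_[p] → ℚ_[p]} {h : ℤ_[p] → ℚ_[p]}
    (hF : TendstoUniformly F h atTop) (hh : Continuous h) :
    Tendsto (fun M => ∑ j ∈ range (p ^ M), F M j) atTop (𝓝 0) := by
  simpa [← sum_add_distrib] using (tendsto_sum_range_pow_nhds_zero hh).add
    (tendsto_sum_sub_of_tendstoUniformly hF (fun M => range (p ^ M)) Nat.cast)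

theorem tendstoUniformly_apply_add_diag {X : Type*} [UniformSpace X]
    {G : ℤ_[p] × ℤ_[p] → X} (hG : Continuous G) {c : ℕ → ℤ_[p]}
    (hc : Tendsto c atTop (𝓝 0)) :
    TendstoUniformly (fun M x => G (c M + x, x)) (fun x => G (x, x)) atTop := by
  have hG₀ := Continuous.tendstoUniformly (fun a x => G (a + x, x)) (by fun_prop) 0
  simp only [zero_add] at hG₀
  exact fun u hu => hc (hG₀ u hu)

theorem apply_add_eq_add_mul {f : ℤ_[p] → ℚ_[p]} {g : ℤ_[p] × ℤ_[p] → ℚ_[p]}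
    (hfg : ∀ x y : ℤ_[p], f x - f y = ((x - y : ℤ_[p]) : ℚ_[p]) * g (x, y)) (c x : ℤ_[p]) :
    f (c + x) = f x + c * g (c + x, x) := by
  have h := hfg (c + x) x
  rw [add_sub_cancel_right] at h
  linear_combination h

variable (p) in
noncomputable def volkenbornSum (h : ℤ_[p] → ℚ_[p]) (M : ℕ) : ℚ_[p] :=
  (p ^ M : ℚ_[p])⁻¹ * ∑ i ∈ range (p ^ M), h i

variable {f : ℤ_[p] → ℚ_[p]} {g : ℤ_[p] × ℤ_[p] → ℚ_[p]}

theorem volkenbornSum_succ_sub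
    (hfg : ∀ x y : ℤ_[p], f x - f y = ((x - y : ℤ_[p]) : ℚ_[p]) * g (x, y)) (M : ℕ) :
    volkenbornSum p f (M + 1) - volkenbornSum p f M = (p : ℚ_[p])⁻¹ *
      ∑ q ∈ range p, (q : ℚ_[p]) * ∑ r ∈ range (p ^ M), g ((q : ℤ_[p]) * p ^ M + r, r) := by
  have hsum : ∑ j ∈ range (p ^ (M + 1)), f j = p * ∑ r ∈ range (p ^ M), f r
      + p ^ M * ∑ q ∈ range p, (q : ℚ_[p]) * ∑ r ∈ range (p ^ M), g ((q : ℤ_[p]) * p ^ M + r, r) := by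
    rw [pow_succ', sum_range_mul_eq_sum_sum]
    push_cast
    simp only [apply_add_eq_add_mul hfg, sum_add_distrib, sum_const, card_range, nsmul_eq_mul,
      mul_sum]
    push_cast
    congr 1
    refine sum_congr rfl fun q _ => sum_congr rfl fun r _ => by ring
  have hp₀ : (p : ℚ_[p]) ≠ 0 := Nat.cast_ne_zero.2 hp.out.ne_zero
  simp only [volkenbornSum, hsum]
  field_simp
  ring

theorem tendsto_volkenbornSum_succ_sub (hg : Continuous g)
    (hfg : ∀ x y : ℤ_[p], f x - f y = ((x - y : ℤ_[p]) : ℚ_[p]) * g (x, y)) :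
    Tendsto (fun M => volkenbornSum p f (M + 1) - volkenbornSum p f M) atTop (𝓝 0) := by
  have hblock (q : ℕ) :
      Tendsto (fun M => ∑ r ∈ range (p ^ M), g ((q : ℤ_[p]) * p ^ M + r, r)) atTop (𝓝 0) := by
    refine tendsto_sum_range_pow_of_tendstoUniformly (tendstoUniformly_apply_add_diag hg ?_)
      (hg.comp (continuous_id.prodMk continuous_id))
    simpa using tendsto_natCast_p_pow_nhds_zero.const_mul (q : ℤ_[p])
  simp_rw [volkenbornSum_succ_sub hfg]
  simpa using (tendsto_finsetSum (range p) fun q _ =>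
    (hblock q).const_mul (q : ℚ_[p])).const_mul (p : ℚ_[p])⁻¹

theorem exists_tendsto_volkenbornSum (hg : Continuous g)
    (hfg : ∀ x y : ℤ_[p], f x - f y = ((x - y : ℤ_[p]) : ℚ_[p]) * g (x, y)) :
    ∃ J, Tendsto (volkenbornSum p f) atTop (𝓝 J) :=
  cauchySeq_tendsto_of_complete <|
    NonarchimedeanAddGroup.cauchySeq_of_tendsto_sub_nhds_zero (tendsto_volkenbornSum_succ_sub hg hfg)

theorem volkenbornSum_comp_add_natCast
    (hfg : ∀ x y : ℤ_[p], f x - f y = ((x - y : ℤ_[p]) : ℚ_[p]) * g (x, y)) (k M : ℕ) :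
    volkenbornSum p (fun t => f (t + k)) M
      = volkenbornSum p f M + ∑ ℓ ∈ range k, g ((p : ℤ_[p]) ^ M + ℓ, ℓ) := by
  have hstep (ℓ : ℕ) :
      f ((p ^ M + ℓ : ℕ) : ℤ_[p]) - f ℓ = (p : ℚ_[p]) ^ M * g ((p : ℤ_[p]) ^ M + ℓ, ℓ) := by
    push_cast
    rw [apply_add_eq_add_mul hfg]
    push_cast
    ring
  have hshift := sum_range_add_right_sub_sum_range (fun i : ℕ => f i) (p ^ M) k
  simp only [hstep, ← mul_sum] at hshift
  push_cast at hshift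
  have hp₀ : (p : ℚ_[p]) ≠ 0 := Nat.cast_ne_zero.2 hp.out.ne_zero
  simp only [volkenbornSum]
  rw [← sub_eq_iff_eq_add', ← mul_sub, hshift]
  field_simp

theorem tendsto_volkenbornSum_comp_add_natCast (hg : Continuous g)
    (hfg : ∀ x y : ℤ_[p], f x - f y = ((x - y : ℤ_[p]) : ℚ_[p]) * g (x, y))
    {J : ℚ_[p]} (hJ : Tendsto (volkenbornSum p f) atTop (𝓝 J)) (k : ℕ) :
    Tendsto (volkenbornSum p fun t => f (t + k)) atTop (𝓝 (J + ∑ ℓ ∈ range k, g (ℓ, ℓ))) := by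
  simp_rw [funext (volkenbornSum_comp_add_natCast hfg k)]
  exact hJ.add (tendsto_finsetSum _ fun ℓ _ =>
    (tendstoUniformly_apply_add_diag hg tendsto_natCast_p_pow_nhds_zero).tendsto_at (ℓ : ℤ_[p]))

end Volkenborn

open Volkenborn

theorem volkenborn_translation_general
    (p : ℕ) [Fact p.Prime] (f : ℤ_[p] → ℚ_[p]) (g : ℤ_[p] × ℤ_[p] → ℚ_[p])
    (hg : Continuous g)
    (hfg : ∀ x y : ℤ_[p], f x - f y = ((x - y : ℤ_[p]) : ℚ_[p]) * g (x, y))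
    (k : ℕ) :
    ∃ I J : ℚ_[p],
      Filter.Tendsto
        (fun M : ℕ => (p ^ M : ℚ_[p])⁻¹ *
          ∑ i ∈ Finset.range (p ^ M), f ((i : ℤ_[p]) + (k : ℤ_[p])))
        Filter.atTop (nhds I) ∧
      Filter.Tendsto
        (fun M : ℕ => (p ^ M : ℚ_[p])⁻¹ * ∑ i ∈ Finset.range (p ^ M), f (i : ℤ_[p]))
        Filter.atTop (nhds J) ∧
      I = J + ∑ ℓ ∈ Finset.range k, g ((ℓ : ℤ_[p]), (ℓ : ℤ_[p])) := by
  obtain ⟨J, hJ⟩ := exists_tendsto_volkenbornSum hg hfg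
  exact ⟨_, J, tendsto_volkenbornSum_comp_add_natCast hg hfg hJ k, hJ, rfl⟩

/-- Translation formula for the Volkenborn integral: if `f : ℤ_p → ℚ_p` is strictly
differentiable (witnessed by a continuous difference-quotient function `g`, so that
`f' x = g (x, x)`), then for every positive integer `k` the Volkenborn integrals of
`t ↦ f (t + k)` and of `f` exist and
`∫ f(t+k) dt = ∫ f(t) dt + ∑_{ℓ=0}^{k-1} f'(ℓ)`. -/
theorem volkenborn_translation
    (p : ℕ) [Fact p.Prime] (f : ℤ_[p] → ℚ_[p]) (g : ℤ_[p] × ℤ_[p] → ℚ_[p])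
    (hg : Continuous g)
    (hfg : ∀ x y : ℤ_[p], f x - f y = ((x - y : ℤ_[p]) : ℚ_[p]) * g (x, y))
    (k : ℕ) (hk : 0 < k) :
    ∃ I J : ℚ_[p],
      Filter.Tendsto
        (fun M : ℕ => (p ^ M : ℚ_[p])⁻¹ *
          ∑ i ∈ Finset.range (p ^ M), f ((i : ℤ_[p]) + (k : ℤ_[p])))
        Filter.atTop (nhds I) ∧
      Filter.Tendsto
        (fun M : ℕ => (p ^ M : ℚ_[p])⁻¹ * ∑ i ∈ Finset.range (p ^ M), f (i : ℤ_[p]))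
        Filter.atTop (nhds J) ∧
      I = J + ∑ ℓ ∈ Finset.range k, g ((ℓ : ℤ_[p]), (ℓ : ℤ_[p])) :=
  volkenborn_translation_general p f g hg hfg k
end

section
/- Let p be a prime and let f : ℤ_p → ℚ_p be strictly differentiable on ℤ_p (so that its Volkenborn integral exists). For a positive integer k with p-adic expansion k = a₀ + a₁p + ⋯ + a_l p^l (digits a_i ∈ {0,…,p−1}, a_l ≠ 0), write k₋ = k − a_l p^l for the integer obtained by deleting the leading digit. Let m ≥ 0 be an integer and c ∈ ℤ, and suppose that v_p( (f(k) − f(k₋)) / (k − k₋) ) ≥ c for every integer k ≥ p^m. Then ∫_{ℤ_p} f(t) dt − p^{−m} · ∑_{k=0}^{p^m−1} f(k) ∈ p^{c−1} ℤ_p. -/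
/-!
Write `S M = p^{-M} ∑_{i < p^M} f(i)`. Splitting `i = a p^M + j` with `a < p`, `j < p^M` gives
`S (M+1) - S M = p^{-(M+1)} ∑_j ∑_a (f(a p^M + j) - f(j))`. For `a ≠ 0` the integer
`k = a p^M + j` has `k₋ = j` and `|k - k₋|_p ≤ p^{-M}`, so every summand has norm at most
`p^{-c-M}` once `M ≥ m`, and `‖S (M+1) - S M‖ ≤ p^{1-c}`. By the ultrametric inequality this
bound survives telescoping and passage to the limit.

The limit exists because `S (M+1) - S M = p^{-1} ∑_a a ∑_{j < p^M} g(a p^M + j, j)`. If `p^{-L}` is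
below a modulus of uniform continuity of `g`, grouping `j` by its residue `r` mod `p^L` shows that
the inner sum is, up to a small error, `p^{M-L} ∑_{r < p^L} g(r, r)`, which is `p`-adically small
for large `M`. In the complete nonarchimedean field `ℚ_p`, consecutive differences tending to zero
suffice for convergence.
-/

open Filter Finset

/-- For a positive integer `k`, `kMinus p k` is the integer obtained by deleting the
leading digit of the base-`p` expansion of `k`. -/
def kMinus (p k : ℕ) : ℕ := k % p ^ (Nat.log p k)

open Topology

theorem Finset.sum_range_mul_eq_sum_sum {M : Type*} [AddCommMonoid M] (F : ℕ → M) (b n : ℕ) :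
    ∑ i ∈ range (b * n), F i = ∑ j ∈ range n, ∑ a ∈ range b, F (a * n + j) := by
  induction b with
  | zero => simp
  | succ b ih =>
    rw [Nat.succ_mul, sum_range_add, ih, ← sum_add_distrib]
    exact sum_congr rfl fun j _ => by rw [sum_range_succ, add_comm (b * n) j]

section Ultrametric

variable {E : Type*} [SeminormedAddCommGroup E] [IsUltrametricDist E]

theorem norm_sum_range_mul_sub_nsmul_le {u v : ℕ → E} {b n : ℕ} {ε : ℝ} (hε : 0 ≤ ε)
    (h : ∀ r < n, ∀ t < b, ‖u (t * n + r) - v r‖ ≤ ε) :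
    ‖∑ j ∈ range (b * n), u j - b • ∑ r ∈ range n, v r‖ ≤ ε := by
  rw [sum_range_mul_eq_sum_sum, smul_sum, ← sum_sub_distrib]
  refine IsUltrametricDist.norm_sum_le_of_forall_le_of_nonneg hε fun r hr => ?_
  rw [show b • v r = ∑ _t ∈ range b, v r by simp, ← sum_sub_distrib]
  exact IsUltrametricDist.norm_sum_le_of_forall_le_of_nonneg hε fun t ht =>
    h r (mem_range.1 hr) t (mem_range.1 ht)

theorem norm_sub_le_of_tendsto_of_norm_succ_sub_le {u : ℕ → E} {I : E} {m : ℕ} {C : ℝ}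
    (hu : Tendsto u atTop (𝓝 I)) (h : ∀ M, m ≤ M → ‖u (M + 1) - u M‖ ≤ C) :
    ‖I - u m‖ ≤ C := by
  have hC : 0 ≤ C := (norm_nonneg _).trans (h m le_rfl)
  refine le_of_tendsto (hu.sub_const (u m)).norm (eventually_atTop.2 ⟨m, fun N hN => ?_⟩)
  rw [← sum_Ico_sub u hN]
  exact IsUltrametricDist.norm_sum_le_of_forall_le_of_nonneg hC fun M hM =>
    h M (mem_Ico.1 hM).1

end Ultrametric

theorem kMinus_mul_pow_add {p a j M : ℕ} (ha : 0 < a) (hap : a < p) (hj : j < p ^ M) :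
    kMinus p (a * p ^ M + j) = j := by
  have hlow : p ^ M ≤ a * p ^ M + j := le_add_right (Nat.le_mul_of_pos_left _ ha)
  have hhigh : a * p ^ M + j < p ^ (M + 1) := by
    calc a * p ^ M + j < (a + 1) * p ^ M := by linarith
      _ ≤ p ^ (M + 1) := by rw [pow_succ']; exact Nat.mul_le_mul_right _ hap
  rw [kMinus, Nat.log_eq_of_pow_le_of_lt_pow hlow hhigh, Nat.mul_add_mod_self_right,
    Nat.mod_eq_of_lt hj]

section Padic

variable {p : ℕ} [Fact p.Prime]

theorem PadicInt.norm_le_pow_of_dvd {x : ℤ_[p]} {n : ℕ} (h : (p : ℤ_[p]) ^ n ∣ x) :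
    ‖x‖ ≤ (p : ℝ) ^ (-n : ℤ) :=
  (PadicInt.norm_le_pow_iff_mem_span_pow x n).2 (Ideal.mem_span_singleton.2 h)

theorem tendsto_sum_range_pow_add_nhds_zero {G : ℤ_[p] × ℤ_[p] → ℚ_[p]} (hG : Continuous G)
    {s : ℕ → ℤ_[p]} (hs : ∀ M, (p : ℤ_[p]) ^ M ∣ s M) :
    Tendsto (fun M => ∑ j ∈ range (p ^ M), G (s M + j, j)) atTop (𝓝 0) := by
  rw [NormedAddGroup.tendsto_nhds_zero]
  intro ε hε
  obtain ⟨δ, hδ, hGδ⟩ := Metric.uniformContinuous_iff.1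
    (CompactSpace.uniformContinuous_of_continuous hG) (ε / 2) (half_pos hε)
  obtain ⟨L, hL⟩ := PadicInt.exists_pow_neg_lt p hδ
  set B := ∑ r ∈ range (p ^ L), G (r, r)
  have hB : Tendsto (fun M => (p : ℚ_[p]) ^ (M - L) * B) atTop (𝓝 0) := by
    simpa using ((tendsto_pow_atTop_nhds_zero_of_norm_lt_one Padic.norm_p_lt_one).comp
      (tendsto_sub_atTop_nat L)).mul_const B
  filter_upwards [eventually_ge_atTop L, hB.norm.eventually (gt_mem_nhds (by simpa using hε))]
    with M hLM hM
  have hclose : ∀ r < p ^ L, ∀ t < p ^ (M - L),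
      ‖G (s M + ((t * p ^ L + r : ℕ) : ℤ_[p]), ((t * p ^ L + r : ℕ) : ℤ_[p])) - G (r, r)‖
        ≤ ε / 2 := by
    intro r _ t _
    have h₂ : (p : ℤ_[p]) ^ L ∣ ((t * p ^ L + r : ℕ) : ℤ_[p]) - r := ⟨t, by push_cast; ring⟩
    have h₁ : (p : ℤ_[p]) ^ L ∣ s M + ((t * p ^ L + r : ℕ) : ℤ_[p]) - r := by
      rw [add_sub_assoc]
      exact dvd_add ((pow_dvd_pow _ hLM).trans (hs M)) h₂
    rw [← dist_eq_norm]
    refine (hGδ ?_).le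
    rw [Prod.dist_eq, dist_eq_norm, dist_eq_norm]
    exact max_lt ((PadicInt.norm_le_pow_of_dvd h₁).trans_lt hL)
      ((PadicInt.norm_le_pow_of_dvd h₂).trans_lt hL)
  have hsplit := norm_sum_range_mul_sub_nsmul_le (u := fun j => G (s M + j, j))
    (v := fun r => G (r, r)) (half_pos hε).le hclose
  rw [← pow_sub_mul_pow p hLM, ← sub_add_cancel (∑ j ∈ _, _) ((p ^ (M - L)) • B)]
  refine (IsUltrametricDist.norm_add_le_max _ _).trans_lt
    (max_lt (hsplit.trans_lt (half_lt_self hε)) ?_)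
  rwa [nsmul_eq_mul, Nat.cast_pow]

variable (p) in
noncomputable def volkenbornSum (u : ℕ → ℚ_[p]) (M : ℕ) : ℚ_[p] :=
  ((p : ℚ_[p]) ^ M)⁻¹ * ∑ i ∈ range (p ^ M), u i

theorem volkenbornSum_succ_sub (u : ℕ → ℚ_[p]) (M : ℕ) :
    volkenbornSum p u (M + 1) - volkenbornSum p u M =
      ((p : ℚ_[p]) ^ (M + 1))⁻¹ *
        ∑ j ∈ range (p ^ M), ∑ a ∈ range p, (u (a * p ^ M + j) - u j) := by
  have hp : (p : ℚ_[p]) ≠ 0 := Nat.cast_ne_zero.2 (Fact.out : p.Prime).ne_zero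
  simp only [volkenbornSum, pow_succ' p M, sum_range_mul_eq_sum_sum, sum_sub_distrib, sum_const,
    card_range, nsmul_eq_mul, ← mul_sum]
  field_simp
  ring

theorem norm_volkenbornSum_succ_sub_le {u : ℕ → ℚ_[p]} {m : ℕ} {c : ℤ}
    (hu : ∀ k : ℕ, p ^ m ≤ k →
      ‖(u k - u (kMinus p k)) / ((k : ℚ_[p]) - ((kMinus p k : ℕ) : ℚ_[p]))‖ ≤ (p : ℝ) ^ (-c))
    {M : ℕ} (hM : m ≤ M) :
    ‖volkenbornSum p u (M + 1) - volkenbornSum p u M‖ ≤ (p : ℝ) ^ (-(c - 1)) := by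
  have hp : (p : ℝ) ≠ 0 := Nat.cast_ne_zero.2 (Fact.out : p.Prime).ne_zero
  have hpow : (0 : ℝ) ≤ (p : ℝ) ^ (-c - M) := zpow_nonneg (Nat.cast_nonneg p) _
  have hterm : ∀ j < p ^ M, ∀ a < p, ‖u (a * p ^ M + j) - u j‖ ≤ (p : ℝ) ^ (-c - M) := by
    intro j hj a hap
    rcases Nat.eq_zero_or_pos a with rfl | ha
    · simpa using hpow
    have hdiff : ((a * p ^ M + j : ℕ) : ℚ_[p]) - (j : ℚ_[p]) = a * (p : ℚ_[p]) ^ M := by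
      push_cast; ring
    have hdiff_ne : ((a * p ^ M + j : ℕ) : ℚ_[p]) - (j : ℚ_[p]) ≠ 0 := by
      rw [hdiff]
      exact mul_ne_zero (by exact_mod_cast ha.ne') (pow_ne_zero _ (by exact_mod_cast hp))
    have hdiff_le : ‖((a * p ^ M + j : ℕ) : ℚ_[p]) - (j : ℚ_[p])‖ ≤ (p : ℝ) ^ (-M : ℤ) := by
      rw [hdiff, norm_mul, Padic.norm_p_pow]
      exact mul_le_of_le_one_left (zpow_nonneg (Nat.cast_nonneg p) _)
        (IsUltrametricDist.norm_natCast_le_one ℚ_[p] a)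
    have hslope := hu (a * p ^ M + j)
      ((Nat.pow_le_pow_right (Fact.out : p.Prime).pos hM).trans
        (le_add_right (Nat.le_mul_of_pos_left _ ha)))
    rw [kMinus_mul_pow_add ha hap hj] at hslope
    rw [← div_mul_cancel₀ (u (a * p ^ M + j) - u j) hdiff_ne, norm_mul, sub_eq_add_neg (-c),
      zpow_add₀ hp]
    exact mul_le_mul hslope hdiff_le (norm_nonneg _) (zpow_nonneg (Nat.cast_nonneg p) _)
  rw [volkenbornSum_succ_sub, norm_mul, norm_inv, Padic.norm_p_pow, ← zpow_neg, neg_neg,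
    show -(c - 1) = (M + 1 : ℕ) + (-c - M) by push_cast; ring, zpow_add₀ hp]
  gcongr
  exact IsUltrametricDist.norm_sum_le_of_forall_le_of_nonneg hpow fun j hj =>
    IsUltrametricDist.norm_sum_le_of_forall_le_of_nonneg hpow fun a ha =>
      hterm j (mem_range.1 hj) a (mem_range.1 ha)

theorem volkenbornSum_succ_sub_eq_slope {f : ℤ_[p] → ℚ_[p]} {g : ℤ_[p] × ℤ_[p] → ℚ_[p]}
    (hfg : ∀ x y : ℤ_[p], f x - f y = ((x - y : ℤ_[p]) : ℚ_[p]) * g (x, y)) (M : ℕ) :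
    volkenbornSum p (fun k => f k) (M + 1) - volkenbornSum p (fun k => f k) M =
      (p : ℚ_[p])⁻¹ * ∑ a ∈ range p,
        (a : ℚ_[p]) * ∑ j ∈ range (p ^ M), g ((a : ℤ_[p]) * (p : ℤ_[p]) ^ M + j, j) := by
  have hp : (p : ℚ_[p]) ≠ 0 := Nat.cast_ne_zero.2 (Fact.out : p.Prime).ne_zero
  have hterm : ∀ j a : ℕ, f ((a * p ^ M + j : ℕ) : ℤ_[p]) - f j =
      (p : ℚ_[p]) ^ M * (a * g ((a : ℤ_[p]) * (p : ℤ_[p]) ^ M + j, j)) := by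
    intro j a
    rw [hfg]
    push_cast
    ring_nf
  rw [volkenbornSum_succ_sub]
  simp only [hterm, ← mul_sum]
  rw [sum_comm, pow_succ, mul_inv, mul_comm (((p : ℚ_[p]) ^ M)⁻¹), mul_assoc,
    inv_mul_cancel_left₀ (pow_ne_zero M hp)]
  simp only [mul_sum]

theorem tendsto_volkenbornSum_succ_sub {f : ℤ_[p] → ℚ_[p]} {g : ℤ_[p] × ℤ_[p] → ℚ_[p]}
    (hg : Continuous g)
    (hfg : ∀ x y : ℤ_[p], f x - f y = ((x - y : ℤ_[p]) : ℚ_[p]) * g (x, y)) :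
    Tendsto (fun M =>
      volkenbornSum p (fun k => f k) (M + 1) - volkenbornSum p (fun k => f k) M) atTop (𝓝 0) := by
  simp_rw [volkenbornSum_succ_sub_eq_slope hfg]
  have hsum := tendsto_finsetSum (range p) fun (a : ℕ) _ =>
    (tendsto_sum_range_pow_add_nhds_zero hg (s := fun M => (a : ℤ_[p]) * (p : ℤ_[p]) ^ M)
      fun M => dvd_mul_left _ _).const_mul (a : ℚ_[p])
  simpa using hsum.const_mul (p : ℚ_[p])⁻¹

end Padic

/-- If `f : ℤ_p → ℚ_p` is strictly differentiable and the difference quotients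
`(f(k) - f(k₋))/(k - k₋)` have `p`-adic valuation at least `c` for all integers
`k ≥ p^m`, then the Volkenborn integral of `f` exists and differs from the partial
sum `p^{-m} ∑_{k=0}^{p^m-1} f(k)` by an element of `p^{c-1} ℤ_p`. -/
theorem volkenborn_integral_congruence
    (p : ℕ) [Fact p.Prime] (f : ℤ_[p] → ℚ_[p]) (g : ℤ_[p] × ℤ_[p] → ℚ_[p])
    (hg : Continuous g)
    (hfg : ∀ x y : ℤ_[p], f x - f y = ((x - y : ℤ_[p]) : ℚ_[p]) * g (x, y))
    (m : ℕ) (c : ℤ)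
    (hval : ∀ k : ℕ, p ^ m ≤ k →
      ‖(f (k : ℤ_[p]) - f ((kMinus p k : ℕ) : ℤ_[p])) /
          ((k : ℚ_[p]) - ((kMinus p k : ℕ) : ℚ_[p]))‖ ≤ (p : ℝ) ^ (-c)) :
    ∃ I : ℚ_[p],
      Filter.Tendsto
        (fun M : ℕ => (p ^ M : ℚ_[p])⁻¹ * ∑ i ∈ Finset.range (p ^ M), f (i : ℤ_[p]))
        Filter.atTop (nhds I) ∧
      ‖I - (p ^ m : ℚ_[p])⁻¹ * ∑ k ∈ Finset.range (p ^ m), f (k : ℤ_[p])‖ ≤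
        (p : ℝ) ^ (-(c - 1)) := by
  obtain ⟨I, hI⟩ := cauchySeq_tendsto_of_complete
    (NonarchimedeanAddGroup.cauchySeq_of_tendsto_sub_nhds_zero
      (tendsto_volkenbornSum_succ_sub hg hfg))
  exact ⟨I, hI, norm_sub_le_of_tendsto_of_norm_succ_sub_le hI
    fun M hM => norm_volkenbornSum_succ_sub_le hval hM⟩
end

section
/- Let p be a prime, let n be a positive integer and j an integer, and define f : ℤ_p → ℚ_p by the binomial-coefficient polynomial f(t) = C(t+j, n) = (t+j)(t+j−1)⋯(t+j−n+1)/n!. For a positive integer k, let k₋ denote the integer obtained from k by deleting the leading digit of its p-adic expansion. Then: (i) for every positive integer k, v_p( (f(k) − f(k₋)) / (k − k₋) ) ≥ −⌊log n / log p⌋; and (ii) for every integer m > ⌊log n / log p⌋ and every integer k ≥ p^m, v_p( (f(k)^p − f(k₋)^p) / (k − k₋) ) ≥ −⌊log n / log p⌋ + 1. -/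
/-!
For naturals `a < k` put `d = k - a`. Vandermonde's identity writes `C(k+j, n) - C(a+j, n)` as
`∑_{b ≥ 1} C(a+j, n-b) C(d, b)`, and `C(d, b) / d = C(d-1, b-1) / b` has norm at most
`‖b‖⁻¹ ≤ p ^ log_p n`; this gives (i) for every `a < k`. For `a = k₋` the difference `d` is
divisible by `p ^ log_p k`, so once `log_p k > log_p n` the integer `A - B` whose quotient by `d`
is bounded in (i) is divisible by `p`, and `A ^ p - B ^ p = (A - B) ∑ A ^ i B ^ (p-1-i)` then
gains one more factor `p` from the geometric sum.
-/

open Filter Finset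

/-- The binomial-coefficient polynomial `t ↦ C(t+j, n)` as a function `ℚ_p → ℚ_p`. -/
noncomputable def binomPoly (p : ℕ) [Fact p.Prime] (j : ℤ) (n : ℕ) (t : ℚ_[p]) : ℚ_[p] :=
  (∏ i ∈ Finset.range n, (t + (j : ℚ_[p]) - (i : ℚ_[p]))) / (n.factorial : ℚ_[p])

lemma kMinus_lt {p k : ℕ} (hp : 1 < p) (hk : 0 < k) : kMinus p k < k :=
  (Nat.mod_lt k (Nat.pow_pos (by omega))).trans_le (Nat.pow_log_le_self p hk.ne')

lemma pow_log_dvd_sub_kMinus (p k : ℕ) : p ^ Nat.log p k ∣ k - kMinus p k :=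
  Nat.dvd_sub_mod k

namespace Padic

variable {p : ℕ} [Fact p.Prime]

lemma norm_natCast_inv_le_pow_log {i : ℕ} (hi : i ≠ 0) :
    ‖(i : ℚ_[p])‖⁻¹ ≤ (p : ℝ) ^ (Nat.log p i : ℤ) := by
  have hp : 1 < p := (Fact.out : p.Prime).one_lt
  have hpos : (0 : ℝ) < (p : ℝ) ^ (Nat.log p i : ℤ) := zpow_pos (by positivity) _
  rw [inv_le_comm₀ (by simpa using hi) hpos, ← zpow_neg, ← not_lt,
    norm_lt_pow_iff_norm_le_pow_sub_one, ← neg_add', ← Int.cast_natCast,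
    ← Nat.cast_succ, norm_int_le_pow_iff_dvd]
  intro hdvd
  have := Nat.le_of_dvd (Nat.pos_of_ne_zero hi) (Int.natCast_dvd_natCast.mp (by exact_mod_cast hdvd))
  exact absurd (Nat.lt_pow_succ_log_self hp i) this.not_gt

lemma norm_choose_succ_div_le (d b : ℕ) :
    ‖((d + 1).choose (b + 1) : ℚ_[p]) / (d + 1 : ℕ)‖ ≤ (p : ℝ) ^ (Nat.log p (b + 1) : ℤ) := by
  have h : ((d + 1).choose (b + 1) : ℚ_[p]) / (d + 1 : ℕ) = d.choose b / (b + 1 : ℕ) := by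
    rw [div_eq_div_iff (Nat.cast_ne_zero.mpr d.succ_ne_zero) (Nat.cast_ne_zero.mpr b.succ_ne_zero)]
    exact_mod_cast (Nat.add_one_mul_choose_eq d b).symm.trans (mul_comm _ _)
  rw [h, norm_div, div_eq_mul_inv]
  calc ‖(d.choose b : ℚ_[p])‖ * ‖((b + 1 : ℕ) : ℚ_[p])‖⁻¹ ≤ 1 * ‖((b + 1 : ℕ) : ℚ_[p])‖⁻¹ := by
        gcongr
        exact_mod_cast norm_int_le_one (d.choose b : ℤ)
    _ ≤ (p : ℝ) ^ (Nat.log p (b + 1) : ℤ) := by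
        rw [one_mul]
        exact norm_natCast_inv_le_pow_log b.succ_ne_zero

lemma norm_choose_add_sub_choose_div_le (x : ℤ) {d : ℕ} (hd : 0 < d) (n : ℕ) :
    ‖((Ring.choose (x + d) n - Ring.choose x n : ℤ) : ℚ_[p]) / d‖ ≤ (p : ℝ) ^ (Nat.log p n : ℤ) := by
  obtain ⟨d, rfl⟩ := Nat.exists_eq_add_one_of_ne_zero hd.ne'
  rcases n with _ | n
  · simp
  rw [Ring.add_choose_eq _ (Commute.all _ _), Finset.Nat.sum_antidiagonal_succ']
  simp only [Ring.choose_zero_right, mul_one, add_sub_cancel_left, Int.cast_sum, Int.cast_mul,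
    Ring.choose_natCast, Int.cast_natCast, Finset.sum_div, mul_div_assoc]
  refine IsUltrametricDist.norm_sum_le_of_forall_le_of_nonneg (by positivity) fun ab hab => ?_
  have hb : ab.2 + 1 ≤ n + 1 := by
    have := Finset.HasAntidiagonal.mem_antidiagonal.mp hab
    omega
  have hchoose : ‖((d + 1).choose (ab.2 + 1) : ℚ_[p]) / (d + 1 : ℕ)‖ ≤
      (p : ℝ) ^ (Nat.log p (n + 1) : ℤ) :=
    (norm_choose_succ_div_le d ab.2).trans
      (zpow_le_zpow_right₀ (by exact_mod_cast (Fact.out : p.Prime).one_lt.le)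
        (by exact_mod_cast Nat.log_mono_right hb))
  rw [norm_mul, ← one_mul ((p : ℝ) ^ _)]
  exact mul_le_mul (norm_int_le_one _) hchoose (norm_nonneg _) zero_le_one

lemma norm_pow_sub_pow_div_le {a b : ℤ} {d : ℚ_[p]} {s : ℤ}
    (hab : ‖((a - b : ℤ) : ℚ_[p]) / d‖ ≤ (p : ℝ) ^ s) (hd : ‖d‖ < (p : ℝ) ^ (-s)) :
    ‖((a ^ p - b ^ p : ℤ) : ℚ_[p]) / d‖ ≤ (p : ℝ) ^ (s - 1) := by
  have hp0 : (0 : ℝ) < p := by exact_mod_cast (Fact.out : p.Prime).pos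
  rcases eq_or_ne d 0 with rfl | hd0
  · simpa using (zpow_pos hp0 _).le
  have hp_dvd : (p : ℤ) ∣ a - b := by
    rw [← norm_intCast_lt_one_iff, ← div_mul_cancel₀ (((a - b : ℤ) : ℚ_[p])) hd0, norm_mul]
    calc _ < (p : ℝ) ^ s * (p : ℝ) ^ (-s) :=
          mul_lt_mul' hab hd (norm_nonneg _) (zpow_pos hp0 _)
      _ = 1 := by rw [← zpow_add₀ hp0.ne', add_neg_cancel, zpow_zero]
  -- each of the `p` terms of the geometric sum is `≡ b ^ (p - 1) [ZMOD p]`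
  have hgeom : ‖((∑ i ∈ range p, a ^ i * b ^ (p - 1 - i) : ℤ) : ℚ_[p])‖ ≤ (p : ℝ) ^ (-1 : ℤ) := by
    simpa only [Nat.cast_one] using
      (norm_int_le_pow_iff_dvd _ 1).mpr (by simpa using dvd_geom_sum₂_self hp_dvd)
  rw [← geom_sum₂_mul, Int.cast_mul, mul_comm, mul_div_right_comm, norm_mul, sub_eq_add_neg s,
    zpow_add₀ hp0.ne']
  exact mul_le_mul hab hgeom (norm_nonneg _) (zpow_pos hp0 _).le

end Padic

open Padic

section

variable {p : ℕ} [Fact p.Prime]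

lemma binomPoly_natCast (j : ℤ) (n k : ℕ) :
    binomPoly p j n k = ((Ring.choose ((k : ℤ) + j) n : ℤ) : ℚ_[p]) := by
  have h := Ring.descPochhammer_eq_factorial_smul_choose ((k : ℤ) + j) n
  rw [← Polynomial.eval_eq_smeval, descPochhammer_eval_eq_prod_range, nsmul_eq_mul] at h
  rw [binomPoly, div_eq_iff (by exact_mod_cast n.factorial_ne_zero)]
  exact_mod_cast h.trans (mul_comm _ _)

lemma norm_binomPoly_sub_div_le (j : ℤ) (n : ℕ) {a k : ℕ} (hak : a < k) :
    ‖(binomPoly p j n k - binomPoly p j n a) / ((k : ℚ_[p]) - a)‖ ≤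
      (p : ℝ) ^ (Nat.log p n : ℤ) := by
  obtain ⟨d, rfl⟩ := Nat.exists_eq_add_of_le hak.le
  have hk : ((a + d : ℕ) : ℤ) + j = (a + j) + d := by push_cast; ring
  have hsub : ((a + d : ℕ) : ℚ_[p]) - a = d := by push_cast; ring
  rw [binomPoly_natCast, binomPoly_natCast, ← Int.cast_sub, hk, hsub]
  exact norm_choose_add_sub_choose_div_le _ (by omega) n

lemma norm_natCast_sub_kMinus_le (k : ℕ) :
    ‖(k : ℚ_[p]) - (kMinus p k : ℕ)‖ ≤ (p : ℝ) ^ (-(Nat.log p k : ℤ)) := by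
  have hle : kMinus p k ≤ k := Nat.mod_le _ _
  rw [← Nat.cast_sub hle, ← Int.cast_natCast, norm_int_le_pow_iff_dvd]
  exact_mod_cast pow_log_dvd_sub_kMinus p k

end

theorem binomPoly_difference_quotient_valuation_general
    (p : ℕ) [Fact p.Prime] (n : ℕ) (j : ℤ) :
    (∀ k : ℕ, 0 < k →
      ‖(binomPoly p j n (k : ℚ_[p]) - binomPoly p j n ((kMinus p k : ℕ) : ℚ_[p])) /
          ((k : ℚ_[p]) - ((kMinus p k : ℕ) : ℚ_[p]))‖ ≤ (p : ℝ) ^ (Nat.log p n : ℤ)) ∧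
    (∀ m : ℕ, Nat.log p n < m → ∀ k : ℕ, p ^ m ≤ k →
      ‖(binomPoly p j n (k : ℚ_[p]) ^ p - binomPoly p j n ((kMinus p k : ℕ) : ℚ_[p]) ^ p) /
          ((k : ℚ_[p]) - ((kMinus p k : ℕ) : ℚ_[p]))‖ ≤ (p : ℝ) ^ ((Nat.log p n : ℤ) - 1)) := by
  have hp : 1 < p := (Fact.out : p.Prime).one_lt
  have hquot (k : ℕ) (hk : 0 < k) := norm_binomPoly_sub_div_le (p := p) j n (kMinus_lt hp hk)
  refine ⟨hquot, fun m hm k hk => ?_⟩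
  have hk0 : 0 < k := (Nat.pow_pos (by omega)).trans_le hk
  have hlog : m ≤ Nat.log p k := Nat.le_log_of_pow_le hp hk
  have hd : ‖(k : ℚ_[p]) - (kMinus p k : ℕ)‖ < (p : ℝ) ^ (-(Nat.log p n : ℤ)) :=
    (norm_natCast_sub_kMinus_le k).trans_lt
      (zpow_lt_zpow_right₀ (by exact_mod_cast hp) (by omega))
  have h := hquot k hk0
  rw [binomPoly_natCast, binomPoly_natCast] at h ⊢
  rw [← Int.cast_sub] at h
  simpa only [Int.cast_pow, Int.cast_sub] using norm_pow_sub_pow_div_le h hd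

/-- Valuation bounds for the difference quotients of `t ↦ C(t+j, n)` and of its
`p`-th power. -/
theorem binomPoly_difference_quotient_valuation
    (p : ℕ) [Fact p.Prime] (n : ℕ) (hn : 0 < n) (j : ℤ) :
    (∀ k : ℕ, 0 < k →
      ‖(binomPoly p j n (k : ℚ_[p]) - binomPoly p j n ((kMinus p k : ℕ) : ℚ_[p])) /
          ((k : ℚ_[p]) - ((kMinus p k : ℕ) : ℚ_[p]))‖ ≤ (p : ℝ) ^ (Nat.log p n : ℤ)) ∧
    (∀ m : ℕ, Nat.log p n < m → ∀ k : ℕ, p ^ m ≤ k →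
      ‖(binomPoly p j n (k : ℚ_[p]) ^ p - binomPoly p j n ((kMinus p k : ℕ) : ℚ_[p]) ^ p) /
          ((k : ℚ_[p]) - ((kMinus p k : ℕ) : ℚ_[p]))‖ ≤ (p : ℝ) ^ ((Nat.log p n : ℤ) - 1)) :=
  binomPoly_difference_quotient_valuation_general p n j
end

section
/- Let n and k be integers with 0 ≤ k ≤ n and n ≥ 1, and let q be a prime with √(10n) < q ≤ n such that the fractional part of n/q is greater than 1/2. Then v_q( (4k)! · (4n−4k)! / ( (2k)! · (2n−2k)! · (k!)² · ((n−k)!)² ) ) ≥ 1, where v_q denotes the q-adic valuation of the rational number in question. -/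
/-!
For `x < q²` Legendre's formula reduces to `v_q(x!) = ⌊x/q⌋`, and `q² > 10n ≥ 4n` covers every
factorial involved. The quotient is `R(k) R(n-k)` with `R(x) = (4x)! / ((2x)! (x!)²)`, so its
valuation is `f(k/q) + f((n-k)/q)` for `f(y) = ⌊4y⌋ - ⌊2y⌋ - 2⌊y⌋ = ⌊4{y}⌋ - ⌊2{y}⌋`. Now `f ≥ 0`,
and `f(y) ≥ 1` as soon as `{y} ≥ 1/4`. Since `{k/q} + {(n-k)/q} ≥ {n/q} > 1/2`, one of the two
fractional parts is at least `1/4`.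
-/

open Nat

namespace Nat

theorem mul_div_eq_mul_div_add_mul_mod_div (c x : ℕ) {q : ℕ} (hq : 0 < q) :
    c * x / q = c * (x / q) + c * (x % q) / q := by
  conv_lhs => rw [← Nat.div_add_mod x q, Nat.mul_add, Nat.mul_left_comm, Nat.mul_add_div hq]

theorem two_mul_div_add_two_mul_div_le_four_mul_div (x q : ℕ) :
    2 * x / q + 2 * (x / q) ≤ 4 * x / q :=
  calc 2 * x / q + 2 * (x / q) ≤ 2 * x / q + 2 * x / q :=
        Nat.add_le_add_left (Nat.mul_div_le_mul_div_assoc 2 x q) _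
    _ ≤ (2 * x + 2 * x) / q := Nat.div_add_div_le_add_div
    _ = 4 * x / q := by ring_nf

theorem two_mul_div_add_two_mul_div_lt_four_mul_div {x q : ℕ} (hq : 0 < q)
    (h : q ≤ 4 * (x % q)) : 2 * x / q + 2 * (x / q) < 4 * x / q := by
  rw [mul_div_eq_mul_div_add_mul_mod_div 2 x hq, mul_div_eq_mul_div_add_mul_mod_div 4 x hq]
  set r := x % q
  have hr : r < q := Nat.mod_lt x hq
  have h4 : 1 ≤ 4 * r / q := (Nat.le_div_iff_mul_le hq).2 (by omega)
  have h2 : 2 * r / q < 2 := (Nat.div_lt_iff_lt_mul hq).2 (by omega)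
  have h24 : 1 ≤ 2 * r / q → 2 ≤ 4 * r / q := fun h1 =>
    (Nat.le_div_iff_mul_le hq).2 (by have := (Nat.le_div_iff_mul_le hq).1 h1; omega)
  omega

theorem le_four_mul_mod_or_le_four_mul_sub_mod {k n q : ℕ} (hk : k ≤ n)
    (h : q < 2 * (n % q)) : q ≤ 4 * (k % q) ∨ q ≤ 4 * ((n - k) % q) := by
  obtain ⟨m, rfl⟩ := Nat.exists_eq_add_of_le hk
  have := Nat.mod_le (k % q + m % q) q
  rw [Nat.add_mod] at h
  rw [Nat.add_sub_cancel_left]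
  omega

end Nat

theorem padicValNat_factorial_of_lt_sq {p n : ℕ} [Fact p.Prime] (hn : n < p ^ 2) :
    padicValNat p n ! = n / p := by
  rw [padicValNat_factorial (Nat.log_lt_of_lt_pow' two_ne_zero hn)]
  simp

def factorialRatio (x : ℕ) : ℚ := (4 * x)! / ((2 * x)! * (x ! : ℚ) ^ 2)

theorem factorialRatio_ne_zero (x : ℕ) : factorialRatio x ≠ 0 := by
  unfold factorialRatio
  positivity

theorem factorialRatio_mul_factorialRatio_sub {k n : ℕ} (hk : k ≤ n) :
    factorialRatio k * factorialRatio (n - k) =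
      ((4 * k)! * (4 * n - 4 * k)! : ℚ) /
        ((2 * k)! * (2 * n - 2 * k)! * (k ! : ℚ) ^ 2 * ((n - k)! : ℚ) ^ 2) := by
  rw [show 4 * n - 4 * k = 4 * (n - k) by omega, show 2 * n - 2 * k = 2 * (n - k) by omega,
    factorialRatio, factorialRatio]
  ring

section

variable {p : ℕ} [Fact p.Prime] {x : ℕ}

theorem padicValRat_factorialRatio (hx : 4 * x < p ^ 2) :
    padicValRat p (factorialRatio x) =
      ((4 * x / p : ℕ) : ℤ) - (2 * x / p : ℕ) - 2 * (x / p : ℕ) := by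
  have hne : ∀ y : ℕ, (y ! : ℚ) ≠ 0 := fun y => by positivity
  rw [factorialRatio, padicValRat.div (hne _) (mul_ne_zero (hne _) (pow_ne_zero _ (hne _))),
    padicValRat.mul (hne _) (pow_ne_zero _ (hne _)), padicValRat.pow,
    padicValRat.of_nat, padicValRat.of_nat, padicValRat.of_nat,
    padicValNat_factorial_of_lt_sq hx, padicValNat_factorial_of_lt_sq (by omega),
    padicValNat_factorial_of_lt_sq (by omega)]
  ring

theorem padicValRat_factorialRatio_nonneg (hx : 4 * x < p ^ 2) :
    0 ≤ padicValRat p (factorialRatio x) := by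
  have := Nat.two_mul_div_add_two_mul_div_le_four_mul_div x p
  rw [padicValRat_factorialRatio hx]
  omega

theorem one_le_padicValRat_factorialRatio (hx : 4 * x < p ^ 2) (h : p ≤ 4 * (x % p)) :
    1 ≤ padicValRat p (factorialRatio x) := by
  have := Nat.two_mul_div_add_two_mul_div_lt_four_mul_div (Fact.out : p.Prime).pos h
  rw [padicValRat_factorialRatio hx]
  omega

end

theorem valuation_factorial_ratio_general (n k q : ℕ) (hk : k ≤ n)
    (hq : q.Prime) (hq1 : Real.sqrt (10 * n) < (q : ℝ))
    (hq3 : 1/2 < Int.fract ((n : ℝ) / q)) :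
    1 ≤ padicValRat q
      (((4 * k).factorial * (4 * n - 4 * k).factorial : ℚ) /
        ((2 * k).factorial * (2 * n - 2 * k).factorial *
          (k.factorial : ℚ) ^ 2 * ((n - k).factorial : ℚ) ^ 2)) := by
  have : Fact q.Prime := ⟨hq⟩
  have hq0 : (0 : ℝ) < q := by exact_mod_cast hq.pos
  have hsq : 10 * n < q ^ 2 := by exact_mod_cast (Real.sqrt_lt' hq0).1 hq1
  have hmod : q < 2 * (n % q) := by
    rw [Int.fract_div_natCast_eq_div_natCast_mod, lt_div_iff₀ hq0] at hq3
    exact_mod_cast (by linarith : (q : ℝ) < 2 * (n % q : ℕ))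
  rw [← factorialRatio_mul_factorialRatio_sub hk,
    padicValRat.mul (factorialRatio_ne_zero _) (factorialRatio_ne_zero _)]
  have hk4 : 4 * k < q ^ 2 := by omega
  have hm4 : 4 * (n - k) < q ^ 2 := by omega
  rcases Nat.le_four_mul_mod_or_le_four_mul_sub_mod hk hmod with h | h
  · linarith [one_le_padicValRat_factorialRatio hk4 h, padicValRat_factorialRatio_nonneg hm4]
  · linarith [padicValRat_factorialRatio_nonneg hk4, one_le_padicValRat_factorialRatio hm4 h]

/-- For `0 ≤ k ≤ n` and a prime `q` with `√(10n) < q ≤ n` and `{n/q} > 1/2`, the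
`q`-adic valuation of `(4k)! (4n-4k)! / ((2k)! (2n-2k)! (k!)² ((n-k)!)²)` is at least 1. -/
theorem valuation_factorial_ratio (n k q : ℕ) (hn : 1 ≤ n) (hk : k ≤ n)
    (hq : q.Prime) (hq1 : Real.sqrt (10 * n) < (q : ℝ)) (hq2 : q ≤ n)
    (hq3 : 1/2 < Int.fract ((n : ℝ) / q)) :
    1 ≤ padicValRat q
      (((4 * k).factorial * (4 * n - 4 * k).factorial : ℚ) /
        ((2 * k).factorial * (2 * n - 2 * k).factorial *
          (k.factorial : ℚ) ^ 2 * ((n - k).factorial : ℚ) ^ 2)) :=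
  valuation_factorial_ratio_general n k q hk hq hq1 hq3
end

section
/- For all real numbers x and y with 1/2 < x < 1 and 0 ≤ y < 1, one has ⌊4y⌋ + ⌊4x − 4y⌋ − ⌊2y⌋ − ⌊2x − 2y⌋ − 2⌊y⌋ − 2⌊x − y⌋ ≥ 1. -/
/-!
The left-hand side is `floorDefect y + floorDefect (x - y)`, and `floorDefect` is `1`-periodic,
nonnegative, and at least `1` as soon as `Int.fract t ≥ 1/4`. Since `y + (x - y) = x > 1/2`,
either `y ≥ 1/4` or `1/4 < x - y < 1`.
-/

section FloorRing

variable {α : Type*} [Ring α] [LinearOrder α] [IsStrictOrderedRing α] [FloorRing α]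

lemma two_mul_floor_le_floor_two_mul (t : α) : 2 * ⌊t⌋ ≤ ⌊2 * t⌋ :=
  Int.le_floor.2 <| by push_cast; exact mul_le_mul_of_nonneg_left (Int.floor_le t) zero_le_two

lemma two_mul_floor_two_mul_le_floor_four_mul (t : α) : 2 * ⌊2 * t⌋ ≤ ⌊4 * t⌋ := by
  have h := two_mul_floor_le_floor_two_mul (2 * t)
  rwa [← mul_assoc, two_mul (2 : α), two_add_two_eq_four] at h

lemma floor_intCast_mul (k : ℤ) (t : α) :
    ⌊(k : α) * t⌋ = ⌊(k : α) * Int.fract t⌋ + k * ⌊t⌋ := by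
  rw [← Int.floor_add_intCast]
  push_cast
  rw [← mul_add, Int.fract_add_floor]

def floorDefect (t : α) : ℤ := ⌊4 * t⌋ - ⌊2 * t⌋ - 2 * ⌊t⌋

lemma floorDefect_nonneg (t : α) : 0 ≤ floorDefect t := by
  have h42 := two_mul_floor_two_mul_le_floor_four_mul t
  have h21 := two_mul_floor_le_floor_two_mul t
  unfold floorDefect
  omega

lemma floorDefect_fract (t : α) : floorDefect (Int.fract t) = floorDefect t := by
  have h4 := floor_intCast_mul 4 t
  have h2 := floor_intCast_mul 2 t
  simp only [Int.cast_ofNat] at h4 h2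
  simp only [floorDefect, h4, h2, Int.floor_fract]
  ring

lemma one_le_floorDefect (t : α) (ht : 1 ≤ 4 * Int.fract t) : 1 ≤ floorDefect t := by
  rw [← floorDefect_fract]
  have h4 : 1 ≤ ⌊4 * Int.fract t⌋ := Int.le_floor.2 <| by simpa using ht
  have h2 : 0 ≤ ⌊2 * Int.fract t⌋ :=
    Int.floor_nonneg.2 <| mul_nonneg zero_le_two (Int.fract_nonneg t)
  have h42 := two_mul_floor_two_mul_le_floor_four_mul (Int.fract t)
  simp only [floorDefect, Int.floor_fract]
  omega

end FloorRing

/-- For real `x, y` with `1/2 < x < 1` and `0 ≤ y < 1`,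
`⌊4y⌋ + ⌊4x-4y⌋ - ⌊2y⌋ - ⌊2x-2y⌋ - 2⌊y⌋ - 2⌊x-y⌋ ≥ 1`. -/
theorem floor_inequality (x y : ℝ) (hx1 : 1/2 < x) (hx2 : x < 1)
    (hy1 : 0 ≤ y) (hy2 : y < 1) :
    1 ≤ ⌊4 * y⌋ + ⌊4 * x - 4 * y⌋ - ⌊2 * y⌋ - ⌊2 * x - 2 * y⌋ - 2 * ⌊y⌋ - 2 * ⌊x - y⌋ := by
  have hsplit : ⌊4 * y⌋ + ⌊4 * x - 4 * y⌋ - ⌊2 * y⌋ - ⌊2 * x - 2 * y⌋ - 2 * ⌊y⌋ - 2 * ⌊x - y⌋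
      = floorDefect y + floorDefect (x - y) := by
    simp only [floorDefect, mul_sub]
    ring
  rw [hsplit]
  rcases le_or_gt (1 / 4) y with hy | hy
  · have := one_le_floorDefect y <| by
      rw [Int.fract_eq_self.2 ⟨hy1, hy2⟩]
      linarith
    linarith [floorDefect_nonneg (x - y)]
  · have := one_le_floorDefect (x - y) <| by
      rw [Int.fract_eq_self.2 ⟨by linarith, by linarith⟩]
      linarith
    linarith [floorDefect_nonneg y]
end

section
/- Fix a nonnegative integer s and δ ∈ {0,1}. For every ε > 0 there exists N such that for all n ≥ N: max_{0 ≤ i ≤ 2s+4} |ρ_{n,i}| ≤ 2^{(6s+12+ε)n} and max_{0 ≤ i ≤ s+2} |σ_{n,i}| ≤ 2^{(3s+6+ε)n}, where |·| denotes the ordinary (Archimedean) absolute value on ℚ. -/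
open Filter Finset

/-- Pochhammer symbol `(α)_k = α (α+1) ⋯ (α+k-1)` for rational `α`. -/
def poch (α : ℚ) (k : ℕ) : ℚ := ∏ i ∈ Finset.range k, (α + i)

/-- The rational function
`A_n(t) = 2^{(6s+12)n} (4t+2n)^δ (t+1/4)_n^{s+2} (t+3/4)_n^{s+2} / (t)_{n+1}^{2s+4}`. -/
def Afun (s δ n : ℕ) (t : ℚ) : ℚ :=
  2 ^ ((6 * s + 12) * n) * (4 * t + 2 * n) ^ δ *
    poch (t + 1/4) n ^ (s + 2) * poch (t + 3/4) n ^ (s + 2) / poch t (n + 1) ^ (2 * s + 4)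

/-- The rational function `B_n(t) = 2^{(3s+6)n} (t+3/4)_n^{s+2} / (t)_{n+1}^{s+2}`. -/
def Bfun (s n : ℕ) (t : ℚ) : ℚ :=
  2 ^ ((3 * s + 6) * n) * poch (t + 3/4) n ^ (s + 2) / poch t (n + 1) ^ (s + 2)

/-- `dlcm n = lcm(1, 2, …, n)`. -/
def dlcm (n : ℕ) : ℕ := (Finset.Icc 1 n).lcm id

open scoped Classical in
/-- `Phi n` is the product of all primes `q` with `√(10 n) < q ≤ n` and `{n/q} > 1/2`. -/
noncomputable def Phi (n : ℕ) : ℕ :=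
  ∏ q ∈ Finset.Icc 1 n,
    if q.Prime ∧ Real.sqrt (10 * n) < (q : ℝ) ∧ 1/2 < Int.fract ((n : ℝ) / q) then q else 1

/-- The coefficient `ρ_{n,i}` of the linear form `S_n` (with `ρ_{n,0}` the constant term),
expressed in terms of the partial-fraction coefficients `a` of `A_n`. -/
def rhoCoef (s n : ℕ) (a : ℕ → ℕ → ℚ) (i : ℕ) : ℚ :=
  if i = 0 then
    (-1 : ℚ) ^ (s + 1) * ∑ i' ∈ Finset.Icc 1 (2 * s + 4), ∑ k ∈ Finset.Icc 1 n,
      ∑ ℓ ∈ Finset.range k, poch (i' : ℚ) (s + 1) * a i' k / ((ℓ : ℚ) + 1/4) ^ (i' + s + 1)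
  else
    (-1 : ℚ) ^ s * poch (i : ℚ) (s + 1) * 4 ^ (i + s) * ∑ k ∈ Finset.range (n + 1), a i k

/-- The coefficient `σ_{n,i}` of the linear form `T_n` (with `σ_{n,0}` the constant term),
expressed in terms of the partial-fraction coefficients `b` of `B_n`. -/
def sigmaCoef (s n : ℕ) (b : ℕ → ℕ → ℚ) (i : ℕ) : ℚ :=
  if i = 0 then
    (-1 : ℚ) ^ (s + 1) * ∑ i' ∈ Finset.Icc 1 (s + 2), ∑ k ∈ Finset.Icc 1 n,
      ∑ ℓ ∈ Finset.range k, poch (i' : ℚ) (s + 1) * b i' k / ((ℓ : ℚ) + 1/4) ^ (i' + s + 1)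
  else
    (-1 : ℚ) ^ s * poch (i : ℚ) (s + 1) * 4 ^ (i + s) * ∑ k ∈ Finset.range (n + 1), b i k

/-!
After clearing denominators the partial-fraction identity, given on `ℚ`, is a polynomial identity,
so it also holds on `ℂ`. Each coefficient is then a residue:
`a_{n,i,k} = (2πi)⁻¹ ∮ A_n(z) (z + k)^(i-1) dz` over the circle `|z + k| = 1/2`, so the Cauchy
estimate bounds it by the maximum of `|A_n|` there.
On that circle `|z + j ± 1/4| ≤ (1 + 1/(|j - k| + 1)) |z + j|`, and these ratios multiply to at
most `(n + 2)^2`, so the Pochhammer products in the numerator of `A_n` are controlled by the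
denominator `|(z)_{n+1}|` up to a polynomial factor. Hence `|a_{n,i,k}| ≤ 2^((6s+12)n)` times a
polynomial in `n`, and likewise `|b_{n,i,k}| ≤ 2^((3s+6)n)` times a polynomial. The `ρ_{n,i}` and
`σ_{n,i}` are sums of `O(n^2)` such coefficients with weights depending only on `s`, and any
polynomial factor is eventually below `2^(εn)`.
-/

open Polynomial

section PartialFractions

variable {K : Type*} [Field K]

def pfSum (p n : ℕ) (c : ℕ → ℕ → K) (t : K) : K :=
  ∑ i ∈ Icc 1 p, ∑ k ∈ range (n + 1), c i k / (t + k) ^ i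

theorem pfSum_mul_prod_pow (p n : ℕ) (c : ℕ → ℕ → K) {t : K} (ht : ∀ k ≤ n, t + k ≠ 0) :
    pfSum p n c t * (∏ k ∈ range (n + 1), (t + k)) ^ p =
      ∑ i ∈ Icc 1 p, ∑ k ∈ range (n + 1),
        c i k * (t + k) ^ (p - i) * ∏ k' ∈ (range (n + 1)).erase k, (t + k') ^ p := by
  simp only [pfSum, sum_mul]
  refine sum_congr rfl fun i hi => sum_congr rfl fun k hk => ?_
  have htk : t + k ≠ 0 := ht k (Nat.lt_succ_iff.mp (mem_range.mp hk))
  rw [← mul_prod_erase _ _ hk, mul_pow, prod_pow, ← pow_sub_mul_pow _ (mem_Icc.mp hi).2]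
  field_simp

noncomputable def pfNumerator (p n : ℕ) (c : ℕ → ℕ → ℚ) : ℚ[X] :=
  ∑ i ∈ Icc 1 p, ∑ k ∈ range (n + 1),
    C (c i k) * (X + C (k : ℚ)) ^ (p - i) * ∏ k' ∈ (range (n + 1)).erase k, (X + C (k' : ℚ)) ^ p

theorem aeval_pfNumerator [CharZero K] (p n : ℕ) (c : ℕ → ℕ → ℚ) {z : K}
    (hz : ∀ k ≤ n, z + k ≠ 0) :
    aeval z (pfNumerator p n c) =
      pfSum p n (fun i k => (c i k : K)) z * (∏ k ∈ range (n + 1), (z + k)) ^ p := by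
  rw [pfSum_mul_prod_pow p n _ hz]
  simp [pfNumerator]

theorem aeval_eq_pfSum_mul_of_eval_eq [CharZero K] {p n : ℕ} {c : ℕ → ℕ → ℚ} {P : ℚ[X]}
    (hP : ∀ t : ℚ, (∀ k ≤ n, t + k ≠ 0) →
      P.eval t = pfSum p n c t * (∏ k ∈ range (n + 1), (t + k)) ^ p)
    {z : K} (hz : ∀ k ≤ n, z + k ≠ 0) :
    aeval z P = pfSum p n (fun i k => (c i k : K)) z * (∏ k ∈ range (n + 1), (z + k)) ^ p := by
  suffices P = pfNumerator p n c by rw [this, aeval_pfNumerator p n c hz]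
  refine eq_of_infinite_eval_eq _ _ ((Set.Ioi_infinite (0 : ℚ)).mono fun t ht => ?_)
  have ht' : ∀ k ≤ n, t + k ≠ 0 := fun k _ => (add_pos_of_pos_of_nonneg ht k.cast_nonneg).ne'
  change P.eval t = (pfNumerator p n c).eval t
  rw [hP t ht', pfSum_mul_prod_pow p n c ht']
  simp [pfNumerator, eval_finsetSum, eval_prod]

end PartialFractions

section Circle

variable {k₀ : ℕ} {z : ℂ}

theorem norm_natCast_sub_natCast (j k : ℕ) : ‖(j : ℂ) - k‖ = |(j : ℝ) - k| := by
  rw [← Complex.ofReal_natCast, ← Complex.ofReal_natCast, ← Complex.ofReal_sub, Complex.norm_real,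
    Real.norm_eq_abs]

theorem abs_natCast_sub_le (hz : ‖z + k₀‖ = 1 / 2) (j : ℕ) : |(j : ℝ) - k₀| ≤ ‖z + j‖ + 1 / 2 := by
  rw [← hz, ← norm_natCast_sub_natCast, ← add_sub_add_left_eq_sub _ _ z]
  exact norm_sub_le _ _

theorem one_le_abs_natCast_sub {j : ℕ} (h : j ≠ k₀) : 1 ≤ |(j : ℝ) - k₀| := by
  have : (1 : ℤ) ≤ |(j : ℤ) - k₀| := Int.one_le_abs (by omega)
  exact_mod_cast this

theorem half_le_norm_add_natCast (hz : ‖z + k₀‖ = 1 / 2) (j : ℕ) : 1 / 2 ≤ ‖z + j‖ := by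
  rcases eq_or_ne j k₀ with rfl | h
  · exact hz.ge
  · linarith [abs_natCast_sub_le hz j, one_le_abs_natCast_sub h]

theorem abs_natCast_sub_add_one_le (hz : ‖z + k₀‖ = 1 / 2) (j : ℕ) :
    |(j : ℝ) - k₀| + 1 ≤ 4 * ‖z + j‖ := by
  rcases eq_or_ne j k₀ with rfl | h
  · rw [sub_self, abs_zero, hz]
    norm_num
  · linarith [abs_natCast_sub_le hz j, one_le_abs_natCast_sub h]

theorem norm_add_add_le (hz : ‖z + k₀‖ = 1 / 2) (j : ℕ) {c : ℂ} (hc : ‖c‖ ≤ 1 / 4) :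
    ‖z + j + c‖ ≤ ‖z + j‖ * (1 + 1 / (|(j : ℝ) - k₀| + 1)) := by
  have hpos : 0 < |(j : ℝ) - k₀| + 1 := by positivity
  have h4 := abs_natCast_sub_add_one_le hz j
  calc ‖z + j + c‖ ≤ ‖z + j‖ + 1 / 4 := (norm_add_le _ _).trans (by linarith)
    _ ≤ ‖z + j‖ * (1 + 1 / (|(j : ℝ) - k₀| + 1)) := by
      rw [mul_one_add, mul_one_div, add_le_add_iff_left, le_div_iff₀ hpos]
      linarith

theorem prod_range_one_add_inv (N : ℕ) : ∏ m ∈ range N, (1 + 1 / ((m : ℝ) + 1)) = N + 1 := by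
  induction N with
  | zero => simp
  | succ N ih =>
    rw [prod_range_succ, ih]
    field_simp
    push_cast
    ring

theorem prod_one_add_inv_abs_sub_le {n : ℕ} (hk₀ : k₀ ≤ n) :
    ∏ j ∈ range (n + 1), (1 + 1 / (|(j : ℝ) - k₀| + 1)) ≤ ((n : ℝ) + 2) ^ 2 := by
  have hleft : ∏ j ∈ range k₀, (1 + 1 / (|(j : ℝ) - k₀| + 1)) ≤ (n : ℝ) + 2 := by
    calc ∏ j ∈ range k₀, (1 + 1 / (|(j : ℝ) - k₀| + 1))
        ≤ ∏ j ∈ range k₀, (1 + 1 / (((k₀ - 1 - j : ℕ) : ℝ) + 1)) := by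
          refine prod_le_prod (fun j _ => by positivity) fun j hj => ?_
          have hj : j < k₀ := mem_range.mp hj
          have : ((k₀ - 1 - j : ℕ) : ℝ) ≤ |(j : ℝ) - k₀| := by
            rw [abs_sub_comm]
            refine le_trans ?_ (le_abs_self _)
            rw [le_sub_iff_add_le]
            exact_mod_cast (by omega : k₀ - 1 - j + j ≤ k₀)
          gcongr
      _ = (k₀ : ℝ) + 1 := by
          rw [prod_range_reflect (fun m => 1 + 1 / ((m : ℝ) + 1)) k₀, prod_range_one_add_inv]
      _ ≤ (n : ℝ) + 2 := by
          have : (k₀ : ℝ) ≤ n := by exact_mod_cast hk₀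
          linarith
  have hright : ∏ j ∈ Ico k₀ (n + 1), (1 + 1 / (|(j : ℝ) - k₀| + 1)) ≤ (n : ℝ) + 2 := by
    rw [prod_Ico_eq_prod_range]
    simp only [Nat.cast_add, add_sub_cancel_left, Nat.abs_cast, prod_range_one_add_inv]
    rw [Nat.cast_sub (by omega)]
    push_cast
    linarith [(Nat.cast_nonneg k₀ : (0 : ℝ) ≤ k₀)]
  rw [← prod_range_mul_prod_Ico _ (hk₀.trans n.le_succ), sq]
  exact mul_le_mul hleft hright (prod_nonneg fun j _ => by positivity) (by positivity)

theorem prod_norm_add_le {n : ℕ} (hk₀ : k₀ ≤ n) (hz : ‖z + k₀‖ = 1 / 2) {c : ℂ}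
    (hc : ‖c‖ ≤ 1 / 4) {S : Finset ℕ} (hS : S ⊆ range (n + 1)) :
    ∏ j ∈ S, ‖z + j + c‖ ≤ ((n : ℝ) + 2) ^ 2 * ∏ j ∈ S, ‖z + j‖ := by
  calc ∏ j ∈ S, ‖z + j + c‖ ≤ ∏ j ∈ S, (‖z + j‖ * (1 + 1 / (|(j : ℝ) - k₀| + 1))) :=
        prod_le_prod (fun _ _ => norm_nonneg _) fun j _ => norm_add_add_le hz j hc
    _ = (∏ j ∈ S, ‖z + j‖) * ∏ j ∈ S, (1 + 1 / (|(j : ℝ) - k₀| + 1)) := prod_mul_distrib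
    _ ≤ (∏ j ∈ S, ‖z + j‖) * ((n : ℝ) + 2) ^ 2 := by
        gcongr
        exact (prod_le_prod_of_subset_of_one_le hS (fun j _ => by positivity)
          fun j _ _ => le_add_of_nonneg_right (by positivity)).trans
          (prod_one_add_inv_abs_sub_le hk₀)
    _ = ((n : ℝ) + 2) ^ 2 * ∏ j ∈ S, ‖z + j‖ := mul_comm _ _

theorem prod_erase_norm_add_le {n m : ℕ} (hz : ‖z + k₀‖ = 1 / 2) (hm : m ≤ n) :
    ∏ j ∈ (range (n + 1)).erase m, ‖z + j‖ ≤ 2 * ∏ j ∈ range (n + 1), ‖z + j‖ := by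
  rw [← mul_prod_erase _ _ (mem_range.mpr (Nat.lt_succ_of_le hm)), ← mul_assoc]
  refine le_mul_of_one_le_left (prod_nonneg fun _ _ => norm_nonneg _) ?_
  linarith [half_le_norm_add_natCast hz m]

end Circle

section Residues

open Complex Metric Real

theorem circleIntegral_sub_pow_div_sub_pow_self (c : ℂ) {R : ℝ} (hR : 0 < R) (e i : ℕ) :
    (∮ z in C(c, R), (z - c) ^ e / (z - c) ^ i) = if i = e + 1 then 2 * π * I else 0 := by
  have heq : Set.EqOn (fun z => (z - c) ^ e / (z - c) ^ i) (fun z => (z - c) ^ ((e : ℤ) - i))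
      (sphere c R) := fun z hz => by
    have : z - c ≠ 0 := sub_ne_zero.mpr (ne_of_mem_sphere hz hR.ne')
    simp only [zpow_sub₀ this, zpow_natCast]
  rw [circleIntegral.integral_congr hR.le heq]
  split_ifs with h
  · subst h
    simpa using circleIntegral.integral_sub_center_inv c hR.ne'
  · exact circleIntegral.integral_sub_zpow_of_ne (by omega) c c R

theorem circleIntegral_sub_pow_div_sub_pow_eq_zero {c w : ℂ} {R : ℝ} (hR : 0 ≤ R)
    (hw : R < ‖w - c‖) (e i : ℕ) : (∮ z in C(c, R), (z - c) ^ e / (z - w) ^ i) = 0 := by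
  have hd : ∀ z ∈ closedBall c R, DifferentiableAt ℂ (fun z => (z - c) ^ e / (z - w) ^ i) z := by
    intro z hz
    have : z - w ≠ 0 := by
      rw [sub_ne_zero]
      rintro rfl
      exact (mem_closedBall_iff_norm'.mp hz).not_gt (by rwa [norm_sub_rev] at hw)
    fun_prop (disch := exact pow_ne_zero _ this)
  exact circleIntegral_eq_zero_of_differentiable_on_off_countable hR Set.countable_empty
    (fun z hz => (hd z hz).continuousAt.continuousWithinAt)
    fun z hz => hd z (ball_subset_closedBall hz.1)

theorem circleIntegral_add_pow_div_add_pow (k k' e i : ℕ) :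
    (∮ z in C(-(k : ℂ), 1 / 2), (z + k) ^ e / (z + k') ^ i) =
      if k' = k ∧ i = e + 1 then 2 * π * I else 0 := by
  rcases eq_or_ne k' k with rfl | hk'
  · simpa using circleIntegral_sub_pow_div_sub_pow_self (-(k' : ℂ)) one_half_pos e i
  · have hfar : (1 / 2 : ℝ) < ‖-(k' : ℂ) - -(k : ℂ)‖ := by
      have := one_le_abs_natCast_sub hk'
      rw [neg_sub_neg, norm_natCast_sub_natCast, abs_sub_comm]
      linarith
    simpa [hk'] using circleIntegral_sub_pow_div_sub_pow_eq_zero (by norm_num) hfar e i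

theorem mem_sphere_natCast_iff {k : ℕ} {z : ℂ} :
    z ∈ sphere (-(k : ℂ)) (1 / 2) ↔ ‖z + k‖ = 1 / 2 := by
  simp [mem_sphere_iff_norm]

theorem circleIntegral_pfSum_mul_pow {p n : ℕ} (c : ℕ → ℕ → ℂ) {i k : ℕ} (hi : i ∈ Icc 1 p)
    (hk : k ≤ n) :
    (∮ z in C(-(k : ℂ), 1 / 2), pfSum p n c z * (z + k) ^ (i - 1)) = 2 * π * I * c i k := by
  have hcont : ∀ i' k', CircleIntegrable (fun z => c i' k' * ((z + k) ^ (i - 1) / (z + k') ^ i'))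
      (-(k : ℂ)) (1 / 2) := fun i' k' => by
    refine ContinuousOn.circleIntegrable (by norm_num) fun z hz => ?_
    have : z + k' ≠ 0 := by
      have := half_le_norm_add_natCast (mem_sphere_natCast_iff.mp hz) k'
      rw [← norm_pos_iff]
      linarith
    fun_prop (disch := exact pow_ne_zero _ this)
  simp only [pfSum, sum_mul, div_mul_eq_mul_div, mul_div_assoc]
  rw [circleIntegral.integral_fun_sum fun i' _ =>
    CircleIntegrable.fun_sum _ fun k' _ => hcont i' k']
  simp only [circleIntegral.integral_fun_sum fun k' _ => hcont _ k',
    circleIntegral.integral_const_mul, circleIntegral_add_pow_div_add_pow,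
    Nat.sub_add_cancel (mem_Icc.mp hi).1, mul_ite, mul_zero]
  rw [sum_eq_single_of_mem i hi fun i' _ hi' => by simp [hi'],
    sum_eq_single_of_mem k (mem_range.mpr (Nat.lt_succ_of_le hk)) fun k' _ hk' => by simp [hk']]
  simp [mul_comm]

theorem norm_coeff_le_of_norm_pfSum_le {p n : ℕ} (c : ℕ → ℕ → ℂ) {M : ℝ} {i k : ℕ}
    (hi : i ∈ Icc 1 p) (hk : k ≤ n) (hM : ∀ z : ℂ, ‖z + k‖ = 1 / 2 → ‖pfSum p n c z‖ ≤ M) :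
    ‖c i k‖ ≤ M / 2 ^ i := by
  have hbound : ‖∮ z in C(-(k : ℂ), 1 / 2), pfSum p n c z * (z + k) ^ (i - 1)‖ ≤
      2 * π * (1 / 2) * (M * (1 / 2) ^ (i - 1)) := by
    refine circleIntegral.norm_integral_le_of_norm_le_const (by norm_num) fun z hz => ?_
    rw [mem_sphere_natCast_iff] at hz
    rw [norm_mul, norm_pow, hz]
    exact mul_le_mul_of_nonneg_right (hM z hz) (by positivity)
  rw [circleIntegral_pfSum_mul_pow c hi hk, norm_mul, norm_mul, norm_mul, Complex.norm_ofNat,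
    Complex.norm_real, Real.norm_of_nonneg pi_pos.le, Complex.norm_I] at hbound
  have h2i : (2 : ℝ) ^ i = 2 * 2 ^ (i - 1) := by
    rw [← pow_succ', Nat.sub_add_cancel (mem_Icc.mp hi).1]
  rw [h2i, le_div_iff₀ (by positivity)]
  field_simp at hbound
  rw [one_div_pow, mul_one_div, le_div_iff₀ (by positivity)] at hbound
  linarith

theorem abs_coeff_le_of_eval_eq {p n : ℕ} {c : ℕ → ℕ → ℚ} {P : ℚ[X]} {M : ℝ}
    (hP : ∀ t : ℚ, (∀ k ≤ n, t + k ≠ 0) →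
      P.eval t = pfSum p n c t * (∏ k ∈ range (n + 1), (t + k)) ^ p)
    {i k : ℕ} (hi : i ∈ Icc 1 p) (hk : k ≤ n)
    (hM : ∀ z : ℂ, ‖z + k‖ = 1 / 2 → ‖aeval z P‖ ≤ M * (∏ j ∈ range (n + 1), ‖z + j‖) ^ p) :
    |(c i k : ℝ)| ≤ M / 2 ^ i := by
  rw [← Complex.norm_ratCast]
  refine norm_coeff_le_of_norm_pfSum_le (fun i k => (c i k : ℂ)) hi hk fun z hz => ?_
  have hpos : ∀ j : ℕ, 0 < ‖z + j‖ := fun j => by linarith [half_le_norm_add_natCast hz j]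
  have hbound := hM z hz
  rw [aeval_eq_pfSum_mul_of_eval_eq hP fun j _ => norm_pos_iff.mp (hpos j), norm_mul, norm_pow,
    norm_prod] at hbound
  exact le_of_mul_le_mul_right hbound (pow_pos (prod_pos fun j _ => hpos j) p)

end Residues

section Numerators

noncomputable def pochPoly (α : ℚ) (n : ℕ) : ℚ[X] := ∏ j ∈ range n, (X + C (α + j))

theorem eval_pochPoly (α t : ℚ) (n : ℕ) : (pochPoly α n).eval t = poch (t + α) n := by
  simp [pochPoly, poch, eval_prod, add_assoc]

theorem prod_erase_norm_add_add_le {n k₀ m : ℕ} {z c : ℂ} (hk₀ : k₀ ≤ n) (hz : ‖z + k₀‖ = 1 / 2)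
    (hc : ‖c‖ ≤ 1 / 4) (hm : m ≤ n) :
    ∏ j ∈ (range (n + 1)).erase m, ‖z + j + c‖ ≤
      2 * ((n : ℝ) + 2) ^ 2 * ∏ j ∈ range (n + 1), ‖z + j‖ := by
  calc ∏ j ∈ (range (n + 1)).erase m, ‖z + j + c‖
      ≤ ((n : ℝ) + 2) ^ 2 * ∏ j ∈ (range (n + 1)).erase m, ‖z + j‖ :=
        prod_norm_add_le hk₀ hz hc (erase_subset _ _)
    _ ≤ ((n : ℝ) + 2) ^ 2 * (2 * ∏ j ∈ range (n + 1), ‖z + j‖) := by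
        gcongr
        exact prod_erase_norm_add_le hz hm
    _ = 2 * ((n : ℝ) + 2) ^ 2 * ∏ j ∈ range (n + 1), ‖z + j‖ := by ring

theorem norm_aeval_pochPoly_le {n k₀ : ℕ} {z : ℂ} (hk₀ : k₀ ≤ n) (hz : ‖z + k₀‖ = 1 / 2) {α : ℚ}
    (hα : α = 1 / 4 ∨ α = 3 / 4) :
    ‖aeval z (pochPoly α n)‖ ≤ 2 * ((n : ℝ) + 2) ^ 2 * ∏ j ∈ range (n + 1), ‖z + j‖ := by
  simp only [pochPoly, map_prod, map_add, aeval_X, aeval_C, eq_ratCast, norm_prod]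
  rcases hα with rfl | rfl
  · convert prod_erase_norm_add_add_le hk₀ hz (c := 1 / 4) (by norm_num) le_rfl using 1
    rw [range_add_one, erase_insert notMem_range_self]
    refine prod_congr rfl fun j _ => ?_
    push_cast
    ring_nf
  · convert prod_erase_norm_add_add_le hk₀ hz (c := -(1 / 4)) (by norm_num) n.zero_le using 1
    rw [range_add_one', erase_insert (by simp), prod_map]
    refine prod_congr rfl fun j _ => ?_
    change _ = ‖z + ((j + 1 : ℕ) : ℂ) + -(1 / 4)‖
    push_cast
    ring_nf

noncomputable def numA (s δ n : ℕ) : ℚ[X] :=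
  C (2 ^ ((6 * s + 12) * n)) * (C 4 * X + C (2 * n : ℚ)) ^ δ *
    pochPoly (1 / 4) n ^ (s + 2) * pochPoly (3 / 4) n ^ (s + 2)

noncomputable def numB (s n : ℕ) : ℚ[X] := C (2 ^ ((3 * s + 6) * n)) * pochPoly (3 / 4) n ^ (s + 2)

theorem poch_ne_zero {t : ℚ} {n : ℕ} (ht : ∀ k ≤ n, t + k ≠ 0) : poch t (n + 1) ≠ 0 :=
  prod_ne_zero_iff.mpr fun k hk => ht k (Nat.lt_succ_iff.mp (mem_range.mp hk))

theorem eval_numA {s δ n : ℕ} {t : ℚ} (ht : ∀ k ≤ n, t + k ≠ 0) :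
    (numA s δ n).eval t = Afun s δ n t * (∏ k ∈ range (n + 1), (t + k)) ^ (2 * s + 4) := by
  rw [← poch, Afun, div_mul_cancel₀ _ (pow_ne_zero _ (poch_ne_zero ht))]
  simp [numA, eval_pochPoly]

theorem eval_numB {s n : ℕ} {t : ℚ} (ht : ∀ k ≤ n, t + k ≠ 0) :
    (numB s n).eval t = Bfun s n t * (∏ k ∈ range (n + 1), (t + k)) ^ (s + 2) := by
  rw [← poch, Bfun, div_mul_cancel₀ _ (pow_ne_zero _ (poch_ne_zero ht))]
  simp [numB, eval_pochPoly]

theorem norm_four_mul_add_le {n k₀ : ℕ} {z : ℂ} (hk₀ : k₀ ≤ n) (hz : ‖z + k₀‖ = 1 / 2) :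
    ‖4 * z + 2 * n‖ ≤ 6 * ((n : ℝ) + 2) := by
  have hz' : ‖z‖ ≤ 1 / 2 + k₀ := by simpa [hz] using norm_sub_le (z + k₀) k₀
  have hk : (k₀ : ℝ) ≤ n := by exact_mod_cast hk₀
  calc ‖4 * z + 2 * n‖ ≤ 4 * ‖z‖ + 2 * n := by simpa using norm_add_le (4 * z) (2 * n)
    _ ≤ 6 * ((n : ℝ) + 2) := by linarith

theorem norm_aeval_numA_le {s δ n k₀ : ℕ} {z : ℂ} (hk₀ : k₀ ≤ n) (hz : ‖z + k₀‖ = 1 / 2) :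
    ‖aeval z (numA s δ n)‖ ≤
      2 ^ ((6 * s + 12) * n) * (6 * ((n : ℝ) + 2)) ^ δ * (2 * ((n : ℝ) + 2) ^ 2) ^ (2 * s + 4) *
        (∏ j ∈ range (n + 1), ‖z + j‖) ^ (2 * s + 4) := by
  have hlin := norm_four_mul_add_le hk₀ hz
  have h14 := norm_aeval_pochPoly_le (n := n) hk₀ hz (α := 1 / 4) (.inl rfl)
  have h34 := norm_aeval_pochPoly_le (n := n) hk₀ hz (α := 3 / 4) (.inr rfl)
  simp only [numA, map_mul, map_pow, map_add, aeval_C, aeval_X, eq_ratCast, norm_mul, norm_pow]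
  push_cast
  calc _ ≤ 2 ^ ((6 * s + 12) * n) * (6 * ((n : ℝ) + 2)) ^ δ *
        (2 * ((n : ℝ) + 2) ^ 2 * ∏ j ∈ range (n + 1), ‖z + j‖) ^ (s + 2) *
        (2 * ((n : ℝ) + 2) ^ 2 * ∏ j ∈ range (n + 1), ‖z + j‖) ^ (s + 2) := by
        norm_num only [Complex.norm_ofNat]
        gcongr
    _ = _ := by
        generalize 2 * ((n : ℝ) + 2) ^ 2 = x
        generalize ∏ j ∈ range (n + 1), ‖z + j‖ = D
        ring

theorem norm_aeval_numB_le {s n k₀ : ℕ} {z : ℂ} (hk₀ : k₀ ≤ n) (hz : ‖z + k₀‖ = 1 / 2) :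
    ‖aeval z (numB s n)‖ ≤
      2 ^ ((3 * s + 6) * n) * (2 * ((n : ℝ) + 2) ^ 2) ^ (s + 2) *
        (∏ j ∈ range (n + 1), ‖z + j‖) ^ (s + 2) := by
  have h34 := norm_aeval_pochPoly_le (n := n) hk₀ hz (α := 3 / 4) (.inr rfl)
  simp only [numB, map_mul, map_pow, aeval_C, eq_ratCast, norm_mul, norm_pow]
  push_cast
  calc _ ≤ 2 ^ ((3 * s + 6) * n) *
        (2 * ((n : ℝ) + 2) ^ 2 * ∏ j ∈ range (n + 1), ‖z + j‖) ^ (s + 2) := by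
        norm_num only [Complex.norm_ofNat]
        gcongr
    _ = _ := by
        generalize 2 * ((n : ℝ) + 2) ^ 2 = x
        generalize ∏ j ∈ range (n + 1), ‖z + j‖ = D
        ring

end Numerators

theorem abs_coeff_A_le {s δ n : ℕ} {a : ℕ → ℕ → ℚ}
    (ha : ∀ t : ℚ, (∀ k ≤ n, t + k ≠ 0) → Afun s δ n t = pfSum (2 * s + 4) n a t)
    {i k : ℕ} (hi : i ∈ Icc 1 (2 * s + 4)) (hk : k ≤ n) :
    |a i k| ≤ 2 ^ ((6 * s + 12) * n) * (6 * ((n : ℚ) + 2)) ^ δ *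
      (2 * ((n : ℚ) + 2) ^ 2) ^ (2 * s + 4) := by
  have h := abs_coeff_le_of_eval_eq (fun t ht => by rw [eval_numA ht, ha t ht]) hi hk
    fun z hz => norm_aeval_numA_le hk hz
  exact_mod_cast h.trans (div_le_self (by positivity) (one_le_pow₀ one_le_two))

theorem abs_coeff_B_le {s n : ℕ} {b : ℕ → ℕ → ℚ}
    (hb : ∀ t : ℚ, (∀ k ≤ n, t + k ≠ 0) → Bfun s n t = pfSum (s + 2) n b t)
    {i k : ℕ} (hi : i ∈ Icc 1 (s + 2)) (hk : k ≤ n) :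
    |b i k| ≤ 2 ^ ((3 * s + 6) * n) * (2 * ((n : ℚ) + 2) ^ 2) ^ (s + 2) := by
  have h := abs_coeff_le_of_eval_eq (fun t ht => by rw [eval_numB ht, hb t ht]) hi hk
    fun z hz => norm_aeval_numB_le hk hz
  exact_mod_cast h.trans (div_le_self (by positivity) (one_le_pow₀ one_le_two))

section LinearForms

def formCoef (s p n : ℕ) (a : ℕ → ℕ → ℚ) (i : ℕ) : ℚ :=
  if i = 0 then
    (-1 : ℚ) ^ (s + 1) * ∑ i' ∈ Icc 1 p, ∑ k ∈ Icc 1 n,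
      ∑ ℓ ∈ range k, poch (i' : ℚ) (s + 1) * a i' k / ((ℓ : ℚ) + 1 / 4) ^ (i' + s + 1)
  else
    (-1 : ℚ) ^ s * poch (i : ℚ) (s + 1) * 4 ^ (i + s) * ∑ k ∈ range (n + 1), a i k

theorem rhoCoef_eq_formCoef (s n : ℕ) (a : ℕ → ℕ → ℚ) :
    rhoCoef s n a = formCoef s (2 * s + 4) n a := rfl

theorem sigmaCoef_eq_formCoef (s n : ℕ) (b : ℕ → ℕ → ℚ) :
    sigmaCoef s n b = formCoef s (s + 2) n b := rfl

theorem abs_sum_le_card_mul {ι : Type*} (S : Finset ι) {f : ι → ℚ} {B : ℚ}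
    (h : ∀ x ∈ S, |f x| ≤ B) : |∑ x ∈ S, f x| ≤ S.card * B :=
  (abs_sum_le_sum_abs _ _).trans ((sum_le_card_nsmul _ _ _ h).trans_eq (nsmul_eq_mul _ _))

theorem abs_poch_natCast_le {i q : ℕ} (m : ℕ) (hi : i ≤ q) : |poch (i : ℚ) m| ≤ (q + m) ^ m := by
  rw [poch, abs_prod]
  refine (prod_le_prod (fun _ _ => abs_nonneg _) fun j hj => ?_).trans_eq
    (by rw [prod_const, card_range])
  have : (j : ℚ) ≤ m := by exact_mod_cast (mem_range.mp hj).le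
  have : (i : ℚ) ≤ q := by exact_mod_cast hi
  rw [abs_of_nonneg (by positivity)]
  linarith

theorem abs_div_quarter_pow_le (x : ℚ) (ℓ e : ℕ) : |x / ((ℓ : ℚ) + 1 / 4) ^ e| ≤ |x| * 4 ^ e := by
  rw [abs_div, abs_pow, abs_of_pos (by positivity : (0 : ℚ) < ℓ + 1 / 4),
    div_le_iff₀ (by positivity), mul_assoc, ← mul_pow]
  refine le_mul_of_one_le_right (abs_nonneg x) (one_le_pow₀ ?_)
  linarith [(Nat.cast_nonneg ℓ : (0 : ℚ) ≤ ℓ)]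

variable {s p n : ℕ} {a : ℕ → ℕ → ℚ} {M : ℚ}

theorem abs_formCoef_zero_le (hM : 0 ≤ M) (ha : ∀ i ∈ Icc 1 p, ∀ k ≤ n, |a i k| ≤ M) :
    |formCoef s p n a 0| ≤ p * n ^ 2 * ((p + s + 1) ^ (s + 1) * 4 ^ (p + s + 1) * M) := by
  have hterm : ∀ i ∈ Icc 1 p, ∀ k ∈ Icc 1 n, ∀ ℓ : ℕ,
      |poch (i : ℚ) (s + 1) * a i k / ((ℓ : ℚ) + 1 / 4) ^ (i + s + 1)| ≤
        (p + s + 1) ^ (s + 1) * 4 ^ (p + s + 1) * M := by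
    intro i hi k hk ℓ
    obtain ⟨-, hip⟩ := mem_Icc.mp hi
    have hpoch : |poch (i : ℚ) (s + 1)| ≤ (p + s + 1) ^ (s + 1) :=
      (abs_poch_natCast_le (s + 1) hip).trans_eq (by push_cast; ring)
    calc _ ≤ |poch (i : ℚ) (s + 1) * a i k| * 4 ^ (i + s + 1) := abs_div_quarter_pow_le _ ℓ _
      _ = |poch (i : ℚ) (s + 1)| * 4 ^ (i + s + 1) * |a i k| := by rw [abs_mul]; ring
      _ ≤ _ := by
        gcongr
        · norm_num
        · exact ha i hi k (mem_Icc.mp hk).2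
  rw [formCoef, if_pos rfl, abs_mul, abs_pow, abs_neg, abs_one, one_pow, one_mul]
  calc _ ≤ (Icc 1 p).card * ((Icc 1 n).card *
        (n * ((p + s + 1) ^ (s + 1) * 4 ^ (p + s + 1) * M))) := by
        refine abs_sum_le_card_mul _ fun i hi => abs_sum_le_card_mul _ fun k hk => ?_
        refine (abs_sum_le_card_mul _ fun ℓ _ => hterm i hi k hk ℓ).trans ?_
        rw [card_range]
        gcongr
        exact_mod_cast (mem_Icc.mp hk).2
    _ = _ := by simp only [Nat.card_Icc, add_tsub_cancel_right]; ring

theorem abs_formCoef_le_of_ne_zero (ha : ∀ i ∈ Icc 1 p, ∀ k ≤ n, |a i k| ≤ M)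
    {i : ℕ} (hi₀ : i ≠ 0) (hi : i ≤ p) :
    |formCoef s p n a i| ≤ (n + 1) * ((p + s + 1) ^ (s + 1) * 4 ^ (p + s + 1) * M) := by
  have hi' : i ∈ Icc 1 p := mem_Icc.mpr ⟨Nat.one_le_iff_ne_zero.mpr hi₀, hi⟩
  have hsum : |∑ k ∈ range (n + 1), a i k| ≤ (n + 1) * M := by
    refine (abs_sum_le_card_mul _ fun k hk =>
      ha i hi' k (Nat.lt_succ_iff.mp (mem_range.mp hk))).trans ?_
    rw [card_range, Nat.cast_succ]
  have hpoch : |poch (i : ℚ) (s + 1)| ≤ (p + s + 1) ^ (s + 1) :=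
    (abs_poch_natCast_le (s + 1) hi).trans_eq (by push_cast; ring)
  rw [formCoef, if_neg hi₀, abs_mul, abs_mul, abs_mul, abs_pow, abs_neg, abs_one, one_pow, one_mul,
    abs_pow, abs_of_pos (four_pos : (0 : ℚ) < 4)]
  have h4 : (4 : ℚ) ^ (i + s) ≤ 4 ^ (p + s + 1) := pow_le_pow_right₀ (by norm_num) (by omega)
  calc _ ≤ ((p : ℚ) + s + 1) ^ (s + 1) * 4 ^ (p + s + 1) * ((n + 1) * M) :=
        mul_le_mul (mul_le_mul hpoch h4 (by positivity) (by positivity)) hsum (abs_nonneg _)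
          (by positivity)
    _ = _ := by ring

theorem abs_formCoef_le (hM : 0 ≤ M) (ha : ∀ i ∈ Icc 1 p, ∀ k ≤ n, |a i k| ≤ M) {i : ℕ}
    (hi : i ≤ p) :
    |formCoef s p n a i| ≤ p * (n + 1) ^ 2 * ((p + s + 1) ^ (s + 1) * 4 ^ (p + s + 1) * M) := by
  rcases eq_or_ne i 0 with rfl | hi₀
  · refine (abs_formCoef_zero_le hM ha).trans ?_
    gcongr
    linarith
  · refine (abs_formCoef_le_of_ne_zero ha hi₀ hi).trans ?_
    have hp : (1 : ℚ) ≤ p := by exact_mod_cast hi₀.bot_lt.trans_le hi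
    have hn : (0 : ℚ) ≤ n := n.cast_nonneg
    gcongr
    nlinarith

end LinearForms

theorem eventually_two_pow_mul_le (c d : ℕ) (K : ℝ) {ε : ℝ} (hε : 0 < ε) :
    ∀ᶠ n : ℕ in atTop, (2 : ℝ) ^ (c * n) * (K * ((n : ℝ) + 2) ^ d) ≤ 2 ^ (((c : ℝ) + ε) * n) := by
  set r : ℝ := 2 ^ ε
  have hr : 1 < r := Real.one_lt_rpow one_lt_two hε
  have h := ((tendsto_pow_const_div_const_pow_of_one_lt d hr).comp
    (tendsto_add_atTop_nat 2)).const_mul (K * r ^ 2)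
  rw [mul_zero] at h
  filter_upwards [h.eventually (gt_mem_nhds one_pos)] with n hn
  have hsplit : (2 : ℝ) ^ (((c : ℝ) + ε) * n) = 2 ^ (c * n) * r ^ n := by
    rw [add_mul, Real.rpow_add two_pos, ← Real.rpow_natCast, ← Real.rpow_natCast r,
      ← Real.rpow_mul two_pos.le, mul_comm ε]
    push_cast
    rfl
  rw [hsplit]
  gcongr
  have hrn : 0 < r ^ n := pow_pos (zero_lt_one.trans hr) n
  simp only [Function.comp_apply, Nat.cast_add, Nat.cast_ofNat, pow_add] at hn
  rw [← div_le_one hrn]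
  refine le_of_eq_of_le ?_ hn.le
  field_simp

theorem eventually_abs_le_two_rpow {x : ℕ → ℕ → ℚ} {c m : ℕ}
    (hx : ∃ K : ℚ, ∃ d : ℕ, ∀ n, 0 < n → ∀ i ≤ m, |x n i| ≤ 2 ^ (c * n) * (K * ((n : ℚ) + 2) ^ d))
    {ε : ℝ} (hε : 0 < ε) :
    ∀ᶠ n : ℕ in atTop, ∀ i ≤ m, ((|x n i| : ℚ) : ℝ) ≤ 2 ^ (((c : ℝ) + ε) * n) := by
  obtain ⟨K, d, hK⟩ := hx
  filter_upwards [eventually_gt_atTop 0, eventually_two_pow_mul_le c d K hε] with n hn hle i hi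
  exact le_trans (by exact_mod_cast hK n hn i hi) hle

theorem exists_abs_rhoCoef_le {s δ : ℕ} {a : ℕ → ℕ → ℕ → ℚ}
    (ha : ∀ n : ℕ, 0 < n → ∀ t : ℚ, (∀ k ≤ n, t + k ≠ 0) →
      Afun s δ n t = pfSum (2 * s + 4) n (a n) t) :
    ∃ K : ℚ, ∃ d : ℕ, ∀ n, 0 < n → ∀ i ≤ 2 * s + 4,
      |rhoCoef s n (a n) i| ≤ 2 ^ ((6 * s + 12) * n) * (K * ((n : ℚ) + 2) ^ d) := by
  set p := 2 * s + 4
  refine ⟨p * (p + s + 1) ^ (s + 1) * 4 ^ (p + s + 1) * 6 ^ δ * 2 ^ p, 2 + δ + 2 * p,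
    fun n hn i hi => ?_⟩
  rw [rhoCoef_eq_formCoef]
  refine (abs_formCoef_le (by positivity) (fun i hi k hk => abs_coeff_A_le (ha n hn) hi hk)
    hi).trans ?_
  have hn : (n : ℚ) + 1 ≤ n + 2 := by linarith
  calc _ ≤ (p : ℚ) * ((n : ℚ) + 2) ^ 2 * ((p + s + 1) ^ (s + 1) * 4 ^ (p + s + 1) *
        (2 ^ ((6 * s + 12) * n) * (6 * ((n : ℚ) + 2)) ^ δ * (2 * ((n : ℚ) + 2) ^ 2) ^ p)) := by
        gcongr
    _ = _ := by
        generalize (n : ℚ) + 2 = m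
        ring

theorem exists_abs_sigmaCoef_le {s : ℕ} {b : ℕ → ℕ → ℕ → ℚ}
    (hb : ∀ n : ℕ, 0 < n → ∀ t : ℚ, (∀ k ≤ n, t + k ≠ 0) → Bfun s n t = pfSum (s + 2) n (b n) t) :
    ∃ K : ℚ, ∃ d : ℕ, ∀ n, 0 < n → ∀ i ≤ s + 2,
      |sigmaCoef s n (b n) i| ≤ 2 ^ ((3 * s + 6) * n) * (K * ((n : ℚ) + 2) ^ d) := by
  set p := s + 2
  refine ⟨p * (p + s + 1) ^ (s + 1) * 4 ^ (p + s + 1) * 2 ^ p, 2 + 2 * p, fun n hn i hi => ?_⟩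
  rw [sigmaCoef_eq_formCoef]
  refine (abs_formCoef_le (by positivity) (fun i hi k hk => abs_coeff_B_le (hb n hn) hi hk)
    hi).trans ?_
  have hn : (n : ℚ) + 1 ≤ n + 2 := by linarith
  calc _ ≤ (p : ℚ) * ((n : ℚ) + 2) ^ 2 * ((p + s + 1) ^ (s + 1) * 4 ^ (p + s + 1) *
        (2 ^ ((3 * s + 6) * n) * (2 * ((n : ℚ) + 2) ^ 2) ^ p)) := by
        gcongr
    _ = _ := by
        generalize (n : ℚ) + 2 = m
        ring

theorem rho_sigma_archimedean_bounds_general (s δ : ℕ)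
    (a b : ℕ → ℕ → ℕ → ℚ)
    (ha : ∀ n : ℕ, 0 < n → ∀ t : ℚ, (∀ k : ℕ, k ≤ n → t + (k : ℚ) ≠ 0) →
      Afun s δ n t = ∑ i ∈ Finset.Icc 1 (2 * s + 4), ∑ k ∈ Finset.range (n + 1),
        a n i k / (t + (k : ℚ)) ^ i)
    (hb : ∀ n : ℕ, 0 < n → ∀ t : ℚ, (∀ k : ℕ, k ≤ n → t + (k : ℚ) ≠ 0) →
      Bfun s n t = ∑ i ∈ Finset.Icc 1 (s + 2), ∑ k ∈ Finset.range (n + 1),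
        b n i k / (t + (k : ℚ)) ^ i)
    (ε : ℝ) (hε : 0 < ε) :
    ∃ N : ℕ, ∀ n : ℕ, N ≤ n →
      (∀ i : ℕ, i ≤ 2 * s + 4 →
        ((|rhoCoef s n (a n) i| : ℚ) : ℝ) ≤
          (2 : ℝ) ^ ((((6 * s + 12 : ℕ) : ℝ) + ε) * (n : ℝ))) ∧
      (∀ i : ℕ, i ≤ s + 2 →
        ((|sigmaCoef s n (b n) i| : ℚ) : ℝ) ≤
          (2 : ℝ) ^ ((((3 * s + 6 : ℕ) : ℝ) + ε) * (n : ℝ))) :=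
  eventually_atTop.mp <|
    (eventually_abs_le_two_rpow (x := fun n => rhoCoef s n (a n))
      (exists_abs_rhoCoef_le ha) hε).and
    (eventually_abs_le_two_rpow (x := fun n => sigmaCoef s n (b n))
      (exists_abs_sigmaCoef_le hb) hε)

/-- Archimedean bounds: for every `ε > 0` and all sufficiently large `n`,
`max_{0 ≤ i ≤ 2s+4} |ρ_{n,i}| ≤ 2^{(6s+12+ε)n}` and
`max_{0 ≤ i ≤ s+2} |σ_{n,i}| ≤ 2^{(3s+6+ε)n}`. -/
theorem rho_sigma_archimedean_bounds (s δ : ℕ) (hδ : δ ≤ 1)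
    (a b : ℕ → ℕ → ℕ → ℚ)
    (ha : ∀ n : ℕ, 0 < n → ∀ t : ℚ, (∀ k : ℕ, k ≤ n → t + (k : ℚ) ≠ 0) →
      Afun s δ n t = ∑ i ∈ Finset.Icc 1 (2 * s + 4), ∑ k ∈ Finset.range (n + 1),
        a n i k / (t + (k : ℚ)) ^ i)
    (hb : ∀ n : ℕ, 0 < n → ∀ t : ℚ, (∀ k : ℕ, k ≤ n → t + (k : ℚ) ≠ 0) →
      Bfun s n t = ∑ i ∈ Finset.Icc 1 (s + 2), ∑ k ∈ Finset.range (n + 1),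
        b n i k / (t + (k : ℚ)) ^ i)
    (ε : ℝ) (hε : 0 < ε) :
    ∃ N : ℕ, ∀ n : ℕ, N ≤ n →
      (∀ i : ℕ, i ≤ 2 * s + 4 →
        ((|rhoCoef s n (a n) i| : ℚ) : ℝ) ≤
          (2 : ℝ) ^ ((((6 * s + 12 : ℕ) : ℝ) + ε) * (n : ℝ))) ∧
      (∀ i : ℕ, i ≤ s + 2 →
        ((|sigmaCoef s n (b n) i| : ℚ) : ℝ) ≤
          (2 : ℝ) ^ ((((3 * s + 6 : ℕ) : ℝ) + ε) * (n : ℝ))) :=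
  rho_sigma_archimedean_bounds_general s δ a b ha hb ε hε
end

section
/- Let m ≥ 2 be an integer, n = 2^m − 1, and k₀ = 2^{m−1}. Then for every integer k with 1 ≤ k ≤ n and k ≠ k₀, one has v₂((k−1)! · (n−k)!) ≥ v₂((k₀−1)! · (n−k₀)!) + 1, where v₂ denotes the 2-adic valuation. -/
/-!
Since `(k - 1)! (n - k)! · k · C(n, k) = n!` and every `C(2^m - 1, k)` is odd,
`v₂((k - 1)! (n - k)!) = v₂(n!) - v₂(k)`. So the claim says that on `1 ≤ k < 2^m` the valuation
`v₂(k)` takes its maximum `m - 1` only at `k = 2^(m-1)`, and everywhere else is at most `m - 2`.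
-/

open Nat

/-- `p^m · C(p^m - 1, k) = C(p^m, k + 1) · (k + 1)`, and `v_p C(p^m, k + 1) = m - v_p(k + 1)`. -/
theorem padicValNat_choose_pow_sub_one {p : ℕ} [hp : Fact p.Prime] {m k : ℕ} (hk : k < p ^ m) :
    padicValNat p (choose (p ^ m - 1) k) = 0 := by
  have hpred : p ^ m - 1 + 1 = p ^ m := Nat.sub_add_cancel (one_le_pow _ _ hp.out.pos)
  have hmul := add_one_mul_choose_eq (p ^ m - 1) k
  rw [hpred] at hmul
  have hkummer := factorization_choose_prime_pow_add_factorization hp.out hk (succ_ne_zero k)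
  rw [factorization_def _ hp.out, factorization_def _ hp.out] at hkummer
  have hval := congrArg (padicValNat p) hmul
  rw [padicValNat.mul (pow_ne_zero _ hp.out.ne_zero) (choose_pos (by omega)).ne',
    padicValNat.mul (choose_pos hk).ne' (succ_ne_zero k), padicValNat.prime_pow] at hval
  omega

theorem padicValNat_factorial_pred_mul_factorial_add {p : ℕ} [Fact p.Prime] {m k : ℕ}
    (hk : 0 < k) (hkp : k < p ^ m) :
    padicValNat p ((k - 1)! * (p ^ m - 1 - k)!) + padicValNat p k =
      padicValNat p (p ^ m - 1)! := by
  have hkn : k ≤ p ^ m - 1 := by omega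
  have hprod : (p ^ m - 1)! = choose (p ^ m - 1) k * (k * (k - 1)!) * (p ^ m - 1 - k)! := by
    rw [mul_factorial_pred hk.ne', choose_mul_factorial_mul_factorial hkn]
  have hk_fac : k * (k - 1)! ≠ 0 := mul_ne_zero hk.ne' (factorial_ne_zero _)
  rw [padicValNat.mul (factorial_ne_zero _) (factorial_ne_zero _), hprod,
    padicValNat.mul (mul_ne_zero (choose_pos hkn).ne' hk_fac) (factorial_ne_zero _),
    padicValNat.mul (choose_pos hkn).ne' hk_fac, padicValNat.mul hk.ne' (factorial_ne_zero _),
    padicValNat_choose_pow_sub_one hkp]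
  ring

theorem padicValNat_two_add_two_le {m k : ℕ} (hk : 0 < k) (hkm : k < 2 ^ m)
    (hne : k ≠ 2 ^ (m - 1)) : padicValNat 2 k + 2 ≤ m := by
  obtain ⟨c, hc⟩ := pow_padicValNat_dvd (p := 2) (n := k)
  have hlt : padicValNat 2 k < m :=
    (Nat.pow_lt_pow_iff_right (by norm_num)).1 ((le_of_dvd hk ⟨c, hc⟩).trans_lt hkm)
  by_contra! hge
  have hv : padicValNat 2 k = m - 1 := by omega
  rw [hv] at hc
  have hpow : 2 ^ m = 2 * 2 ^ (m - 1) := by rw [← pow_succ']; congr 1; omega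
  have hc1 : c = 1 := by
    rcases c with _ | _ | c
    · omega
    · rfl
    · nlinarith
  exact hne (by rw [hc, hc1, mul_one])

theorem two_adic_valuation_factorial_product_general (m : ℕ)
    (n k₀ : ℕ) (hn : n = 2 ^ m - 1) (hk₀ : k₀ = 2 ^ (m - 1))
    (k : ℕ) (hk1 : 1 ≤ k) (hk2 : k ≤ n) (hk3 : k ≠ k₀) :
    padicValNat 2 ((k₀ - 1).factorial * (n - k₀).factorial) + 1 ≤
      padicValNat 2 ((k - 1).factorial * (n - k).factorial) := by
  subst hn hk₀
  have hm : m ≠ 0 := by rintro rfl; simp at hk2; omega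
  have hk₀_lt : 2 ^ (m - 1) < 2 ^ m := Nat.pow_lt_pow_right (by norm_num) (by omega)
  have h₀ := padicValNat_factorial_pred_mul_factorial_add (p := 2) (by positivity) hk₀_lt
  have h := padicValNat_factorial_pred_mul_factorial_add (p := 2) hk1 (by omega : k < 2 ^ m)
  have hv₀ : padicValNat 2 (2 ^ (m - 1)) = m - 1 := padicValNat.prime_pow _
  have hv := padicValNat_two_add_two_le hk1 (by omega) hk3
  omega

/-- For `n = 2^m - 1` (`m ≥ 2`) and `k₀ = 2^{m-1}`: for every `1 ≤ k ≤ n` with `k ≠ k₀`,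
`v₂((k-1)! (n-k)!) ≥ v₂((k₀-1)! (n-k₀)!) + 1`. -/
theorem two_adic_valuation_factorial_product (m : ℕ) (hm : 2 ≤ m)
    (n k₀ : ℕ) (hn : n = 2 ^ m - 1) (hk₀ : k₀ = 2 ^ (m - 1))
    (k : ℕ) (hk1 : 1 ≤ k) (hk2 : k ≤ n) (hk3 : k ≠ k₀) :
    padicValNat 2 ((k₀ - 1).factorial * (n - k₀).factorial) + 1 ≤
      padicValNat 2 ((k - 1).factorial * (n - k).factorial) :=
  two_adic_valuation_factorial_product_general m n k₀ hn hk₀ k hk1 hk2 hk3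
end
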